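/- arXiv:2405.12682 — 9 statements merged into one kernel-verified Lean document; each statement's English description precedes it below -/
import Mathlib

section
/- Let X ⊆ ℝⁿ be closed and nonempty. If a ∉ X and x ∈ m(a), then for every t ∈ [0,1], the point a_t = x + t(a − x) satisfies m(a_t) ∋ x and d(a_t, X) = t·d(a,X). In particular, if a ∉ M_X then m(a_t) = {x} for all t ∈ (0,1]. -/
open Metric Set Filter

noncomputable section

abbrev E (n : ℕ) := EuclideanSpace ℝ (Fin n)

/-- The set of closest points of `X` to `a`. -/
def mSet {n : ℕ} (X : Set (E n)) (a : E n) : Set (E n) :=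
  {x ∈ X | dist a x = Metric.infDist a X}

/-- The medial axis: points with more than one closest point in `X`. -/
def medialAxis {n : ℕ} (X : Set (E n)) : Set (E n) :=
  {a | ∃ x ∈ mSet X a, ∃ y ∈ mSet X a, x ≠ y}

theorem stmt_2 {n : ℕ} (X : Set (E n)) (hX : IsClosed X) (hne : X.Nonempty)
    (a : E n) (ha : a ∉ X) (x : E n) (hx : x ∈ mSet X a) :
    (∀ t ∈ Set.Icc (0:ℝ) 1,
        x ∈ mSet X (x + t • (a - x)) ∧
        Metric.infDist (x + t • (a - x)) X = t * Metric.infDist a X) ∧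
    (a ∉ medialAxis X → ∀ t ∈ Set.Ioc (0:ℝ) 1, mSet X (x + t • (a - x)) = {x}) := by
  obtain ⟨hxX, hxd⟩ := hx
  set d := Metric.infDist a X with hd
  have key : ∀ t, 0 ≤ t → t ≤ 1 → x ∈ mSet X (x + t • (a - x)) ∧
      Metric.infDist (x + t • (a - x)) X = t * d := by
    intro t ht0 ht1
    have h1 : dist (x + t • (a - x)) x = t * d := by
      rw [dist_eq_norm, add_sub_cancel_left, norm_smul, Real.norm_eq_abs,
        abs_of_nonneg ht0, ← hxd, dist_eq_norm]
    have h2 : dist a (x + t • (a - x)) = (1 - t) * d := by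
      rw [dist_eq_norm]
      have heq : a - (x + t • (a - x)) = (1 - t) • (a - x) := by module
      rw [heq, norm_smul, Real.norm_eq_abs, abs_of_nonneg (by linarith), ← hxd, dist_eq_norm]
    have hlb : ∀ y ∈ X, t * d ≤ dist (x + t • (a - x)) y := by
      intro y hy
      have hda : d ≤ dist a y := Metric.infDist_le_dist_of_mem hy
      have htri : dist a y ≤ dist a (x + t • (a - x)) + dist (x + t • (a - x)) y :=
        dist_triangle _ _ _
      rw [h2] at htri
      linarith
    have hinf : Metric.infDist (x + t • (a - x)) X = t * d := by
      apply le_antisymm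
      · calc Metric.infDist (x + t • (a - x)) X ≤ dist (x + t • (a - x)) x :=
              Metric.infDist_le_dist_of_mem hxX
          _ = t * d := h1
      · by_contra h
        push_neg at h
        obtain ⟨y, hy, hlt⟩ := (Metric.infDist_lt_iff hne).mp h
        exact absurd (hlb y hy) (not_le.mpr hlt)
    exact ⟨⟨hxX, h1.trans hinf.symm⟩, hinf⟩
  constructor
  · intro t ht
    exact key t ht.1 ht.2
  · intro hma t ht
    obtain ⟨hk1, hk2⟩ := key t (le_of_lt ht.1) ht.2
    ext y
    constructor
    · rintro ⟨hyX, hyd⟩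
      by_contra hyx
      have hyx' : y ≠ x := hyx
      have h2 : dist a (x + t • (a - x)) = (1 - t) * d := by
        rw [dist_eq_norm]
        have heq : a - (x + t • (a - x)) = (1 - t) • (a - x) := by module
        rw [heq, norm_smul, Real.norm_eq_abs, abs_of_nonneg (by linarith [ht.2]), ← hxd, dist_eq_norm]
      have hday : dist a y ≤ d := by
        have := dist_triangle a (x + t • (a - x)) y
        rw [h2, hyd, hk2] at this
        linarith
      have hday' : d ≤ dist a y := Metric.infDist_le_dist_of_mem hyX
      exact hma ⟨x, ⟨hxX, hxd⟩, y, ⟨hyX, (le_antisymm hday hday').trans hd.symm⟩, hyx'.symm⟩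
    · rintro rfl
      exact hk1

end
end

section
/- Let X ⊆ ℝⁿ be closed and nonempty, and let m be the single-valued closest-point map defined on ℝⁿ \ M_X, the complement of the medial axis. If a ∈ M_X has two distinct closest points x₁, x₂ ∈ m(a), then there exist sequences uₖ, vₖ → a with uₖ, vₖ ∉ M_X such that ‖m(uₖ) − m(vₖ)‖ → ‖x₁ − x₂‖ > 0. -/
open Metric Set Filter

noncomputable section

lemma mSet_between {n : ℕ} (X : Set (E n)) (hne : X.Nonempty) (a x : E n)
    (hx : x ∈ mSet X a) (hd : 0 < dist a x) {t : ℝ} (ht0 : 0 < t) (ht1 : t < 1) :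
    mSet X (a + t • (x - a)) = {x} := by
  obtain ⟨hxX, hxd⟩ := hx
  set d := Metric.infDist a X with hdd
  set p := a + t • (x - a) with hp
  have hap : dist a p = t * d := by
    have hap' : a - p = (-t) • (x - a) := by rw [hp]; module
    rw [dist_eq_norm, hap', norm_smul, Real.norm_eq_abs, abs_neg, abs_of_pos ht0,
      ← dist_eq_norm', hxd]
  have hpx : dist p x = (1 - t) * d := by
    have : p - x = (1 - t) • (a - x) := by
      rw [hp]; module
    rw [dist_eq_norm, this, norm_smul, Real.norm_eq_abs, abs_of_pos (by linarith : (0:ℝ) < 1 - t),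
      ← dist_eq_norm, hxd]
  have hlow : ∀ y ∈ X, (1 - t) * d ≤ dist p y := by
    intro y hy
    have h1 : d ≤ dist a y := by
      rw [hdd]; exact Metric.infDist_le_dist_of_mem hy
    have h2 : dist a y ≤ dist a p + dist p y := dist_triangle a p y
    nlinarith [dist_nonneg (x := p) (y := y)]
  have hinf : Metric.infDist p X = (1 - t) * d := by
    apply le_antisymm
    · calc Metric.infDist p X ≤ dist p x := Metric.infDist_le_dist_of_mem hxX
        _ = (1 - t) * d := hpx
    · by_contra hlt
      push_neg at hlt
      obtain ⟨y, hyX, hylt⟩ := (Metric.infDist_lt_iff hne).mp hlt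
      exact absurd hylt (not_lt.mpr (hlow y hyX))
  ext y
  simp only [mSet, Set.mem_setOf_eq, Set.mem_singleton_iff]
  constructor
  · rintro ⟨hyX, hyd⟩
    rw [hinf] at hyd
    have hay : dist a y = d := by
      have h1 : d ≤ dist a y := by rw [hdd]; exact Metric.infDist_le_dist_of_mem hyX
      have h2 : dist a y ≤ dist a p + dist p y := dist_triangle a p y
      nlinarith
    have heq : dist a p + dist p y = dist a y := by rw [hap, hyd, hay]; ring
    have hw : Wbtw ℝ a p y := dist_add_dist_eq_iff.mp heq
    obtain ⟨s, ⟨hs0, hs1⟩, hps⟩ := hw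
    have hps' : p = a + s • (y - a) := by
      rw [← hps]; simp [AffineMap.lineMap_apply]; module
    have hkey : t • (x - a) = s • (y - a) := by
      have := hps'.symm.trans hp
      have : a + s • (y - a) = a + t • (x - a) := by rw [← hps', hp]
      exact (add_right_injective a this).symm
    have hxa : x - a ≠ 0 := by
      intro h
      rw [sub_eq_zero] at h
      rw [h, dist_self] at hd; exact lt_irrefl 0 hd
    have hs0' : s ≠ 0 := by
      intro h
      rw [h, zero_smul, smul_eq_zero] at hkey
      rcases hkey with h | h
      · exact absurd h (ne_of_gt ht0)
      · exact hxa h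
    have hnorm : s * ‖y - a‖ = t * ‖x - a‖ := by
      have := congrArg norm hkey
      rwa [norm_smul, norm_smul, Real.norm_eq_abs, Real.norm_eq_abs, abs_of_pos ht0,
        abs_of_nonneg hs0, eq_comm] at this
    have hya : ‖y - a‖ = ‖x - a‖ := by
      rw [← dist_eq_norm, ← dist_eq_norm, dist_comm y a, dist_comm x a, hay, hxd]
    have hst : s = t := by
      have hd' : 0 < ‖x - a‖ := by
        rw [← dist_eq_norm, dist_comm]; exact hd
      rw [hya] at hnorm
      exact mul_right_cancel₀ (ne_of_gt hd') hnorm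
    have : t • (x - a) = t • (y - a) := by rw [hkey, hst]
    have := smul_right_injective (E n) (ne_of_gt ht0) this
    have : x - a = y - a := this
    linear_combination (norm := abel) -this
  · rintro rfl
    exact ⟨hxX, by rw [hpx, hinf]⟩

theorem stmt_3 {n : ℕ} (X : Set (E n)) (hX : IsClosed X) (hne : X.Nonempty)
    (a : E n) (ha : a ∈ medialAxis X)
    (x₁ x₂ : E n) (h₁ : x₁ ∈ mSet X a) (h₂ : x₂ ∈ mSet X a) (hne' : x₁ ≠ x₂) :
    ∃ u v : ℕ → E n,
      Filter.Tendsto u Filter.atTop (nhds a) ∧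
      Filter.Tendsto v Filter.atTop (nhds a) ∧
      (∀ k, u k ∉ medialAxis X) ∧ (∀ k, v k ∉ medialAxis X) ∧
      (∀ m : E n → E n, (∀ b ∉ medialAxis X, m b ∈ mSet X b) →
        Filter.Tendsto (fun k => dist (m (u k)) (m (v k))) Filter.atTop (nhds (dist x₁ x₂))) ∧
      0 < dist x₁ x₂ := by
  have hd1 : 0 < dist a x₁ := by
    by_contra h
    push_neg at h
    have h0 : dist a x₁ = 0 := le_antisymm h dist_nonneg
    have h0' : dist a x₂ = 0 := by rw [h₂.2, ← h₁.2, h0]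
    exact hne' ((dist_eq_zero.mp h0).symm.trans (dist_eq_zero.mp h0'))
  have hd2 : 0 < dist a x₂ := by rw [h₂.2, ← h₁.2]; exact hd1
  set c : ℕ → ℝ := fun k => 1 / (k + 2) with hc
  have hc0 : ∀ k, 0 < c k := fun k => by positivity
  have hc1 : ∀ k, c k < 1 := by
    intro k
    rw [hc]
    rw [div_lt_one (by positivity)]
    linarith [Nat.cast_nonneg (α := ℝ) k]
  have hctend : Filter.Tendsto c Filter.atTop (nhds 0) := by
    have : Filter.Tendsto (fun k : ℕ => ((k : ℝ) + 2)) Filter.atTop Filter.atTop :=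
      Filter.tendsto_atTop_add_const_right _ 2 tendsto_natCast_atTop_atTop
    rw [hc]; simp only [one_div]; exact this.inv_tendsto_atTop
  refine ⟨fun k => a + c k • (x₁ - a), fun k => a + c k • (x₂ - a), ?_, ?_, ?_, ?_, ?_, ?_⟩
  · have := hctend.smul_const (x₁ - a)
    rw [zero_smul] at this
    simpa using tendsto_const_nhds.add this
  · have := hctend.smul_const (x₂ - a)
    rw [zero_smul] at this
    simpa using tendsto_const_nhds.add this
  · intro k hk
    obtain ⟨y, hy, z, hz, hyz⟩ := hk
    rw [mSet_between X hne a x₁ h₁ hd1 (hc0 k) (hc1 k)] at hy hz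
    exact hyz (hy.trans hz.symm)
  · intro k hk
    obtain ⟨y, hy, z, hz, hyz⟩ := hk
    rw [mSet_between X hne a x₂ h₂ hd2 (hc0 k) (hc1 k)] at hy hz
    exact hyz (hy.trans hz.symm)
  · intro m hm
    have hu : ∀ k, m (a + c k • (x₁ - a)) = x₁ := by
      intro k
      have hnot : (a + c k • (x₁ - a)) ∉ medialAxis X := by
        intro hk
        obtain ⟨y, hy, z, hz, hyz⟩ := hk
        rw [mSet_between X hne a x₁ h₁ hd1 (hc0 k) (hc1 k)] at hy hz
        exact hyz (hy.trans hz.symm)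
      have := hm _ hnot
      rwa [mSet_between X hne a x₁ h₁ hd1 (hc0 k) (hc1 k), Set.mem_singleton_iff] at this
    have hv : ∀ k, m (a + c k • (x₂ - a)) = x₂ := by
      intro k
      have hnot : (a + c k • (x₂ - a)) ∉ medialAxis X := by
        intro hk
        obtain ⟨y, hy, z, hz, hyz⟩ := hk
        rw [mSet_between X hne a x₂ h₂ hd2 (hc0 k) (hc1 k)] at hy hz
        exact hyz (hy.trans hz.symm)
      have := hm _ hnot
      rwa [mSet_between X hne a x₂ h₂ hd2 (hc0 k) (hc1 k), Set.mem_singleton_iff] at this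
    simp only [hu, hv]
    exact tendsto_const_nhds
  · exact dist_pos.mpr hne'
end
end

section
/- Let X ⊆ ℝⁿ be closed and nonempty. Then the closest-point function m (as a single-valued map) restricted to ℝⁿ \ closure(M_X) is locally Lipschitz. -/
/-!
Off the closure of the medial axis the nearest-point map `m` is continuous, so `infDist · X` is
differentiable there with gradient the unit normal `(x - m x) / infDist x X`. Consequently, for
`κ < 1`, `infDist · X - κ * dist · b` has no interior local maximum on a ball `closedBall b T`
avoiding the closure of the medial axis; letting `κ → 1` yields a point `y` with
`infDist y X = infDist b X + T`, so the normal segment through `b` extends by `T`. The open ball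
about `y` of radius `infDist b X + T` misses `X`, which bounds `⟪b - m b, z - m b⟫` by a fixed
fraction `< 1/2` of `‖z - m b‖ ^ 2` for all `z ∈ X`, uniformly for `b` near `a`. Adding these
bounds for two points `b`, `c` (with `z = m c`, resp. `z = m b`) gives the Lipschitz estimate
`T * ‖m b - m c‖ ≤ (D + T) * ‖b - c‖`, where `D` bounds `infDist · X` near `a`; this is
Federer's argument for sets of positive reach.
-/

open Metric Set Filter

noncomputable section

open scoped RealInnerProductSpace Topology

section InnerProductSpace

variable {F : Type*} [NormedAddCommGroup F] [InnerProductSpace ℝ F]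

theorem two_mul_inner_le_of_norm_le_norm_sub {v w : F} (h : ‖v‖ ≤ ‖v - w‖) :
    2 * ⟪v, w⟫ ≤ ‖w‖ ^ 2 := by
  have := pow_le_pow_left₀ (norm_nonneg v) h 2
  rw [norm_sub_sq_real] at this
  linarith

theorem abs_norm_sq_sub_norm_sq_sub_inner_le {a x p q : F} (hp : ‖x - q‖ ≤ ‖x - p‖)
    (hq : ‖a - p‖ ≤ ‖a - q‖) :
    |‖x - q‖ ^ 2 - ‖a - p‖ ^ 2 - 2 * ⟪a - p, x - a⟫| ≤
      (3 * ‖x - a‖ + 2 * ‖q - p‖) * ‖x - a‖ := by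
  have hup := pow_le_pow_left₀ (norm_nonneg _) hp 2
  have hlo := pow_le_pow_left₀ (norm_nonneg _) hq 2
  rw [show x - p = (x - a) + (a - p) by abel, norm_add_sq_real, real_inner_comm] at hup
  rw [show a - q = (x - q) - (x - a) by abel, norm_sub_sq_real (x - q)] at hlo
  have hcs : |⟪(x - q) - (a - p), x - a⟫| ≤ (‖x - a‖ + ‖q - p‖) * ‖x - a‖ := by
    refine (abs_real_inner_le_norm _ _).trans (mul_le_mul_of_nonneg_right ?_ (norm_nonneg _))
    rw [show (x - q) - (a - p) = (x - a) - (q - p) by abel]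
    exact norm_sub_le _ _
  rw [inner_sub_left] at hcs
  rw [abs_le] at hcs ⊢
  constructor <;> nlinarith [norm_nonneg (x - a), norm_nonneg (q - p)]

theorem mul_dist_le_mul_dist_of_inner_le {b c p q : F} {D T : ℝ} (hDT : 0 ≤ D + T)
    (hb : 2 * (D + T) * ⟪b - p, q - p⟫ ≤ D * ‖q - p‖ ^ 2)
    (hc : 2 * (D + T) * ⟪c - q, p - q⟫ ≤ D * ‖p - q‖ ^ 2) :
    T * dist p q ≤ (D + T) * dist b c := by
  rw [dist_eq_norm, dist_eq_norm, norm_sub_rev p q]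
  rw [norm_sub_rev p q, show p - q = -(q - p) by abel, inner_neg_right] at hc
  have hsplit : ⟪b - p, q - p⟫ - ⟪c - q, q - p⟫ = ⟪b - c, q - p⟫ + ‖q - p‖ ^ 2 := by
    rw [← inner_sub_left, ← real_inner_self_eq_norm_sq, ← inner_add_left]
    congr 1
    abel
  have hcs := real_inner_le_norm (c - b) (q - p)
  rw [← neg_sub b c, inner_neg_left, norm_neg] at hcs
  rcases (norm_nonneg (q - p)).eq_or_lt with h0 | hpos
  · rw [← h0]
    nlinarith [norm_nonneg (b - c)]
  · refine le_of_mul_le_mul_right ?_ hpos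
    nlinarith

end InnerProductSpace

section MedialAxis

variable {n : ℕ} {X : Set (E n)} {m : E n → E n}

theorem eq_of_mem_mSet_of_notMem_medialAxis {a x y : E n} (ha : a ∉ medialAxis X)
    (hx : x ∈ mSet X a) (hy : y ∈ mSet X a) : x = y := by
  by_contra hxy
  exact ha ⟨x, hx, y, hy, hxy⟩

theorem continuousWithinAt_compl_medialAxis (hX : IsClosed X)
    (hm : ∀ b ∉ medialAxis X, m b ∈ mSet X b) {a : E n} (ha : a ∉ medialAxis X) :
    ContinuousWithinAt m (medialAxis X)ᶜ a := by
  rw [Metric.continuousWithinAt_iff]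
  intro ε hε
  set d := infDist a X
  set K := (X ∩ closedBall a (d + 1)) \ ball (m a) ε
  have hK : IsCompact K := ((isCompact_closedBall a _).inter_left hX).diff isOpen_ball
  -- off a neighbourhood of `m a`, the points of `X` are uniformly farther from `a` than `d`
  obtain ⟨r, hdr, hr⟩ := hK.exists_forall_le' (continuous_const.dist continuous_id').continuousOn
    (a := d) fun z hz => by
      refine (infDist_le_dist_of_mem hz.1.1).lt_of_ne fun hzd => hz.2 ?_
      rw [eq_of_mem_mSet_of_notMem_medialAxis ha ⟨hz.1.1, hzd.symm⟩ (hm a ha)]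
      exact mem_ball_self hε
  refine ⟨min 1 (r - d) / 2, by positivity, fun y hy hya => ?_⟩
  have hmy : dist a (m y) < d + min 1 (r - d) := calc
    dist a (m y) ≤ dist a y + dist y (m y) := dist_triangle _ _ _
    _ = dist y a + infDist y X := by rw [dist_comm, (hm y hy).2]
    _ ≤ dist y a + (d + dist y a) := by gcongr; exact infDist_le_infDist_add_dist
    _ < d + min 1 (r - d) := by linarith
  by_contra hfar
  have := hr (m y) ⟨⟨(hm y hy).1, ?_⟩, fun h => hfar (mem_ball.1 h)⟩
  · linarith [min_le_right 1 (r - d)]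
  · rw [mem_closedBall, dist_comm]
    linarith [min_le_left 1 (r - d)]

theorem continuousAt_of_notMem_closure_medialAxis (hX : IsClosed X)
    (hm : ∀ b ∉ medialAxis X, m b ∈ mSet X b) {a : E n} (ha : a ∉ closure (medialAxis X)) :
    ContinuousAt m a :=
  (continuousWithinAt_compl_medialAxis hX hm (notMem_of_notMem_closure ha)).continuousAt
    (mem_of_superset (isClosed_closure.isOpen_compl.mem_nhds ha)
      (compl_subset_compl.2 subset_closure))

theorem hasFDerivAt_infDist_sq (hX : IsClosed X) (hm : ∀ b ∉ medialAxis X, m b ∈ mSet X b)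
    {a : E n} (ha : a ∉ closure (medialAxis X)) :
    HasFDerivAt (fun x => infDist x X ^ 2) (innerSL ℝ ((2 : ℝ) • (a - m a))) a := by
  have hshift : Tendsto (fun h => a + h) (𝓝 0) (𝓝 a) := by
    simpa using (continuous_const_add a).tendsto 0
  have hoff : ∀ᶠ h in 𝓝 (0 : E n), a + h ∉ medialAxis X :=
    hshift.eventually (mem_of_superset (isClosed_closure.isOpen_compl.mem_nhds ha)
      fun _ hx => notMem_of_notMem_closure hx)
  have hcoeff : Tendsto (fun h : E n => 3 * ‖h‖ + 2 * ‖m (a + h) - m a‖) (𝓝 0) (𝓝 0) := by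
    have hm' := ((continuousAt_of_notMem_closure_medialAxis hX hm ha).tendsto.comp
      hshift).sub_const (m a)
    simpa using (tendsto_norm_zero.const_mul 3).add (hm'.norm.const_mul 2)
  have haM := notMem_of_notMem_closure ha
  have hdist : ∀ x ∉ medialAxis X, infDist x X = ‖x - m x‖ := fun x hx => by
    rw [← dist_eq_norm, (hm x hx).2]
  rw [hasFDerivAt_iff_isLittleO_nhds_zero, Asymptotics.isLittleO_iff]
  intro c hc
  filter_upwards [hoff, hcoeff.eventually (gt_mem_nhds hc)] with h hh hlt
  have hbound := abs_norm_sq_sub_norm_sq_sub_inner_le (a := a) (x := a + h) (p := m a)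
    (q := m (a + h)) (by rw [← hdist _ hh, ← dist_eq_norm]; exact infDist_le_dist_of_mem (hm a haM).1)
    (by rw [← hdist _ haM, ← dist_eq_norm]; exact infDist_le_dist_of_mem (hm _ hh).1)
  rw [← hdist _ hh, ← hdist _ haM, add_sub_cancel_left] at hbound
  rw [innerSL_apply_apply, real_inner_smul_left, Real.norm_eq_abs]
  exact hbound.trans (mul_le_mul_of_nonneg_right hlt.le (norm_nonneg h))

theorem hasFDerivAt_infDist (hX : IsClosed X) (hm : ∀ b ∉ medialAxis X, m b ∈ mSet X b)
    {a : E n} (ha : a ∉ closure (medialAxis X)) (h0 : 0 < infDist a X) :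
    HasFDerivAt (fun x => infDist x X) (innerSL ℝ ((infDist a X)⁻¹ • (a - m a))) a := by
  have hsqrt := (hasFDerivAt_infDist_sq hX hm ha).sqrt (pow_ne_zero 2 h0.ne')
  simp only [Real.sqrt_sq infDist_nonneg] at hsqrt
  refine hsqrt.congr_fderiv ?_
  ext v
  simp only [smul_apply, innerSL_apply_apply, real_inner_smul_left, smul_eq_mul]
  field_simp

theorem not_isLocalMax_infDist_sub_mul_dist (hX : IsClosed X)
    (hm : ∀ b ∉ medialAxis X, m b ∈ mSet X b) {y : E n} (hy : y ∉ closure (medialAxis X))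
    (h0 : 0 < infDist y X) (b : E n) {κ : ℝ} (hκ0 : 0 ≤ κ) (hκ1 : κ < 1) :
    ¬ IsLocalMax (fun x => infDist x X - κ * dist x b) y := by
  intro hmax
  set u := (infDist y X)⁻¹ • (y - m y)
  have hu : ‖u‖ = 1 := by
    rw [norm_smul, ← dist_eq_norm, (hm y (notMem_of_notMem_closure hy)).2, norm_inv,
      Real.norm_of_nonneg h0.le, inv_mul_cancel₀ h0.ne']
  have hline : HasDerivAt (fun s : ℝ => y + s • u) u 0 := by
    simpa using ((hasDerivAt_id (0 : ℝ)).smul_const u).const_add y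
  -- along the unit normal `u` the distance grows at rate `1 > κ`, while `κ * dist · b` grows
  -- at rate at most `κ`
  have hderiv : HasDerivAt (fun s : ℝ => infDist (y + s • u) X - κ * s) (1 - κ) 0 := by
    have hgrad : HasFDerivAt (fun x => infDist x X) (innerSL ℝ u) (y + (0 : ℝ) • u) := by
      rw [zero_smul, add_zero]
      exact hasFDerivAt_infDist hX hm hy h0
    have := (hgrad.comp_hasDerivAt 0 hline).sub ((hasDerivAt_id (0 : ℝ)).const_mul κ)
    rw [innerSL_apply_apply, real_inner_self_eq_norm_sq, hu, one_pow, mul_one] at this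
    exact this
  have hmaxOn : IsLocalMaxOn (fun s : ℝ => infDist (y + s • u) X - κ * s) (Ici 0) 0 := by
    have hcont : Tendsto (fun s : ℝ => y + s • u) (𝓝 0) (𝓝 y) := by
      simpa using hline.continuousAt.tendsto
    have := hcont.eventually hmax
    filter_upwards [nhdsWithin_le_nhds this, self_mem_nhdsWithin] with s hs (hs0 : 0 ≤ s)
    have hdist : dist (y + s • u) b ≤ dist y b + s := by
      have := dist_triangle (y + s • u) y b
      rw [dist_self_add_left, norm_smul, Real.norm_of_nonneg hs0, hu, mul_one] at this
      linarith
    simp only [zero_smul, add_zero, mul_zero, sub_zero] at hs ⊢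
    nlinarith
  have hone : (1 : ℝ) ∈ posTangentConeAt (Ici 0) 0 :=
    mem_posTangentConeAt_of_segment_subset (by simp [segment_eq_Icc, Icc_subset_Ici_self])
  have := hmaxOn.hasFDerivWithinAt_nonpos hderiv.hasFDerivAt.hasFDerivWithinAt hone
  simp only [ContinuousLinearMap.toSpanSingleton_apply, one_smul] at this
  linarith

theorem exists_mem_closedBall_add_mul_le_infDist (hX : IsClosed X)
    (hm : ∀ b ∉ medialAxis X, m b ∈ mSet X b) {b : E n} {T : ℝ} (hT : 0 < T)
    (hb : closedBall b T ⊆ (closure (medialAxis X))ᶜ) (h0 : 0 < infDist b X)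
    {κ : ℝ} (hκ0 : 0 ≤ κ) (hκ1 : κ < 1) :
    ∃ y ∈ closedBall b T, infDist b X + κ * T ≤ infDist y X := by
  obtain ⟨y, hy, hmax⟩ := (isCompact_closedBall b T).exists_isMaxOn (nonempty_closedBall.2 hT.le)
    (f := fun x => infDist x X - κ * dist x b) (by fun_prop)
  have hby : infDist b X ≤ infDist y X - κ * dist y b := by
    simpa using hmax (mem_closedBall_self hT.le)
  have hTy : T ≤ dist y b := by
    by_contra! hlt
    refine not_isLocalMax_infDist_sub_mul_dist hX hm (hb hy) ?_ b hκ0 hκ1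
      (hmax.isLocalMax (mem_of_superset (isOpen_ball.mem_nhds hlt) ball_subset_closedBall))
    nlinarith [dist_nonneg (x := y) (y := b)]
  exact ⟨y, hy, by nlinarith⟩

theorem exists_mem_closedBall_add_le_infDist (hX : IsClosed X)
    (hm : ∀ b ∉ medialAxis X, m b ∈ mSet X b) {b : E n} {T : ℝ} (hT : 0 < T)
    (hb : closedBall b T ⊆ (closure (medialAxis X))ᶜ) (h0 : 0 < infDist b X) :
    ∃ y ∈ closedBall b T, infDist b X + T ≤ infDist y X := by
  obtain ⟨y, hy, hmax⟩ := (isCompact_closedBall b T).exists_isMaxOn (nonempty_closedBall.2 hT.le)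
    (continuous_infDist_pt X).continuousOn
  refine ⟨y, hy, le_of_tendsto (f := fun κ => infDist b X + κ * T) (x := 𝓝[<] 1) ?_ ?_⟩
  · simpa using ((show Continuous fun κ : ℝ => infDist b X + κ * T by fun_prop).tendsto
      1).mono_left nhdsWithin_le_nhds
  · filter_upwards [Ioo_mem_nhdsLT zero_lt_one] with κ hκ
    obtain ⟨z, hz, hbz⟩ := exists_mem_closedBall_add_mul_le_infDist hX hm hT hb h0 hκ.1.le hκ.2
    exact hbz.trans (hmax hz)

theorem two_mul_inner_le_of_closedBall_subset (hX : IsClosed X)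
    (hm : ∀ b ∉ medialAxis X, m b ∈ mSet X b) {b : E n} {T D : ℝ} (hT : 0 < T)
    (hb : closedBall b T ⊆ (closure (medialAxis X))ᶜ) (hD : infDist b X ≤ D)
    {z : E n} (hz : z ∈ X) :
    2 * (D + T) * ⟪b - m b, z - m b⟫ ≤ D * ‖z - m b‖ ^ 2 := by
  have hbM := notMem_of_notMem_closure (hb (mem_closedBall_self hT.le))
  set p := m b
  set d := infDist b X
  have hbp : ‖b - p‖ = d := by rw [← dist_eq_norm]; exact (hm b hbM).2
  rcases (infDist_nonneg : 0 ≤ d).eq_or_lt with h0 | h0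
  · rw [norm_eq_zero.1 (hbp.trans h0.symm), inner_zero_left, mul_zero]
    exact mul_nonneg (infDist_nonneg.trans hD) (sq_nonneg _)
  obtain ⟨y, hy, hdy⟩ := exists_mem_closedBall_add_le_infDist hX hm hT hb h0
  rw [mem_closedBall, dist_eq_norm] at hy
  have hyp : infDist y X ≤ ‖y - p‖ := by
    rw [← dist_eq_norm]; exact infDist_le_dist_of_mem (hm b hbM).1
  have htri := norm_sub_le_norm_sub_add_norm_sub y b p
  have hyb : ‖y - b‖ = T := by linarith
  -- equality in the triangle inequality: `b` lies on the segment from `p` to `y`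
  have hcol : d • (y - b) = T • (b - p) := by
    have := norm_add_eq_iff_real.1
      (show ‖(y - b) + (b - p)‖ = ‖y - b‖ + ‖b - p‖ by rw [sub_add_sub_cancel]; linarith)
    rwa [hyb, hbp] at this
  have hlin : (d + T) • (b - p) = d • (y - p) := by
    rw [add_smul, ← hcol, ← smul_add]
    congr 1
    abel
  have hinner : (d + T) * ⟪b - p, z - p⟫ = d * ⟪y - p, z - p⟫ := by
    rw [← real_inner_smul_left, hlin, real_inner_smul_left]
  have hball : 2 * ⟪y - p, z - p⟫ ≤ ‖z - p‖ ^ 2 := by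
    refine two_mul_inner_le_of_norm_le_norm_sub ?_
    have := infDist_le_dist_of_mem (x := y) hz
    rw [sub_sub_sub_cancel_right, ← dist_eq_norm y z]
    linarith
  have hd : 2 * (d + T) * ⟪b - p, z - p⟫ ≤ d * ‖z - p‖ ^ 2 := by
    linarith [mul_le_mul_of_nonneg_left hball h0.le]
  have h2 : 2 * ⟪b - p, z - p⟫ ≤ ‖z - p‖ ^ 2 := by
    refine le_of_mul_le_mul_left ?_ (by linarith : 0 < d + T)
    nlinarith [sq_nonneg ‖z - p‖]
  linarith [mul_le_mul_of_nonneg_left h2 (sub_nonneg.2 hD)]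

end MedialAxis

theorem stmt_4_general {n : ℕ} (X : Set (E n)) (hX : IsClosed X)
    (m : E n → E n) (hm : ∀ b ∉ medialAxis X, m b ∈ mSet X b)
    (a : E n) (ha : a ∉ closure (medialAxis X)) :
    ∃ ε > 0, ∃ C : NNReal, LipschitzOnWith C m (Metric.ball a ε) := by
  obtain ⟨ρ, hρ, hρa⟩ := Metric.isOpen_iff.1 isClosed_closure.isOpen_compl a ha
  set T := ρ / 2 with hT_def
  set D := infDist a X + T
  have hT : 0 < T := half_pos hρ
  have hD : 0 ≤ D := add_nonneg infDist_nonneg hT.le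
  have hreach : ∀ b ∈ ball a T, ∀ z ∈ X,
      2 * (D + T) * ⟪b - m b, z - m b⟫ ≤ D * ‖z - m b‖ ^ 2 := by
    intro b hb z hz
    rw [mem_ball] at hb
    refine two_mul_inner_le_of_closedBall_subset hX hm hT (fun y hy => hρa ?_) ?_ hz
    · rw [mem_closedBall] at hy
      rw [mem_ball]
      linarith [dist_triangle y b a]
    · linarith [infDist_le_infDist_add_dist (s := X) (x := b) (y := a)]
  have hmX : ∀ b ∈ ball a T, m b ∈ X := fun b hb =>
    (hm b (notMem_of_notMem_closure (hρa (ball_subset_ball (by linarith) hb)))).1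
  refine ⟨T, hT, ((D + T) / T).toNNReal, LipschitzOnWith.of_dist_le_mul fun b hb c hc => ?_⟩
  have := mul_dist_le_mul_dist_of_inner_le (by linarith) (hreach b hb _ (hmX c hc))
    (hreach c hc _ (hmX b hb))
  rw [Real.coe_toNNReal _ (by positivity), div_mul_eq_mul_div, le_div_iff₀ hT]
  linarith

theorem stmt_4 {n : ℕ} (X : Set (E n)) (hX : IsClosed X) (hne : X.Nonempty)
    (m : E n → E n) (hm : ∀ b ∉ medialAxis X, m b ∈ mSet X b)
    (a : E n) (ha : a ∉ closure (medialAxis X)) :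
    ∃ ε > 0, ∃ C : NNReal, LipschitzOnWith C m (Metric.ball a ε) :=
  stmt_4_general X hX m hm a ha
end
end

section
/- Let X ⊆ ℝⁿ be closed and nonempty. The distance function d_X(a) = d(a,X) is differentiable at every a ∈ ℝⁿ \ (X ∪ closure(M_X)), with gradient ∇d_X(a) = (a − m(a))/d_X(a). -/
/-!
If `p` is a nearest point of `X` to `x`, then `d_X(y) ≤ ‖y - p‖` with equality at `y = x`, and the
unit vector of `y - p` is a subgradient of the norm at `y - p`. Hence
`d_X(b) - d_X(a) ≤ ⟪(b - m a)/‖b - m a‖, b - a⟫` and, exchanging the roles of `a` and `b`,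
`d_X(a) - d_X(b) ≤ ⟪(a - m b)/‖a - m b‖, a - b⟫`. Off the closure of the medial axis `m` is a
nearest-point selection on a neighbourhood of `a`, and a compactness argument shows that it is
continuous at `a`, where the nearest point is unique. Both unit vectors therefore tend to
`(a - m a)/d_X(a)`, which squeezes `d_X` to first order.
-/

open Metric Set Filter

noncomputable section

open Topology NormedSpace
open scoped InnerProductSpace

section InnerProductSpace

variable {F : Type*} [NormedAddCommGroup F] [InnerProductSpace ℝ F]

theorem real_inner_normalize_sub_le_norm_sub_norm (x y : F) :
    ⟪normalize y, x - y⟫_ℝ ≤ ‖x‖ - ‖y‖ := by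
  rcases eq_or_ne y 0 with rfl | hy
  · simp
  have hcs : ⟪y, x⟫_ℝ ≤ ‖y‖ * ‖x‖ := real_inner_le_norm y x
  rw [NormedSpace.normalize, real_inner_smul_left, inner_sub_right,
    real_inner_self_eq_norm_mul_norm, inv_mul_le_iff₀ (norm_pos_iff.mpr hy)]
  linarith

theorem continuousAt_normalize {y : F} (hy : y ≠ 0) : ContinuousAt (normalize : F → F) y :=
  (continuousAt_id.norm.inv₀ (norm_ne_zero_iff.mpr hy)).smul continuousAt_id

theorem infDist_sub_infDist_le_inner_normalize {X : Set F} {x y p : F} (hp : p ∈ X)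
    (hxp : dist x p = infDist x X) :
    infDist y X - infDist x X ≤ ⟪normalize (y - p), y - x⟫_ℝ := by
  have hy : infDist y X ≤ ‖y - p‖ := dist_eq_norm y p ▸ infDist_le_dist_of_mem hp
  have h := real_inner_normalize_sub_le_norm_sub_norm (x - p) (y - p)
  rw [show x - p - (y - p) = -(y - x) by abel, inner_neg_right, ← dist_eq_norm, hxp] at h
  linarith

theorem hasGradientAt_of_sub_le_inner [CompleteSpace F] {f : F → ℝ} {a v : F} {u w : F → F}
    (hu : Tendsto u (𝓝 a) (𝓝 v)) (hw : Tendsto w (𝓝 a) (𝓝 v))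
    (hlow : ∀ᶠ b in 𝓝 a, f a - f b ≤ ⟪u b, a - b⟫_ℝ)
    (hup : ∀ᶠ b in 𝓝 a, f b - f a ≤ ⟪w b, b - a⟫_ℝ) :
    HasGradientAt f v a := by
  rw [hasGradientAt_iff_isLittleO, Asymptotics.isLittleO_iff]
  intro c hc
  filter_upwards [hlow, hup, hu.eventually (closedBall_mem_nhds v hc),
    hw.eventually (closedBall_mem_nhds v hc)] with b hlow hup hub hwb
  rw [dist_eq_norm] at hub hwb
  have hlow' : ⟪u b - v, a - b⟫_ℝ ≤ c * ‖b - a‖ := by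
    rw [← norm_neg (b - a), neg_sub]
    exact (real_inner_le_norm _ _).trans (mul_le_mul_of_nonneg_right hub (norm_nonneg _))
  have hup' : ⟪w b - v, b - a⟫_ℝ ≤ c * ‖b - a‖ :=
    (real_inner_le_norm _ _).trans (mul_le_mul_of_nonneg_right hwb (norm_nonneg _))
  rw [inner_sub_left] at hlow' hup'
  simp only [show a - b = -(b - a) by abel, inner_neg_right] at hlow hlow'
  rw [Real.norm_eq_abs, abs_le]
  constructor <;> linarith

end InnerProductSpace

theorem continuousAt_of_eventually_nearest_of_unique {α : Type*} [MetricSpace α] [ProperSpace α]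
    {X : Set α} (hX : IsClosed X) {m : α → α} {a : α}
    (hm : ∀ᶠ b in 𝓝 a, m b ∈ X ∧ dist b (m b) = infDist b X)
    (huniq : ∀ x ∈ X, dist a x = infDist a X → x = m a) : ContinuousAt m a := by
  have hbdd : ∀ᶠ b in 𝓝 a, m b ∈ closedBall a (infDist a X + 2) := by
    filter_upwards [hm, ball_mem_nhds a one_pos] with b ⟨_, hb⟩ hba
    rw [mem_ball] at hba
    rw [mem_closedBall]
    calc dist (m b) a ≤ dist b (m b) + dist b a := dist_triangle_left _ _ _
      _ ≤ infDist a X + dist b a + dist b a := by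
        rw [hb]; linarith [infDist_le_infDist_add_dist (x := b) (y := a) (s := X)]
      _ ≤ infDist a X + 2 := by linarith
  refine (isCompact_closedBall a _).tendsto_nhds_of_unique_mapClusterPt hbdd fun x _ hx => ?_
  obtain ⟨U, hUa, hUx⟩ := mapClusterPt_iff_ultrafilter.mp hx
  have hmU : ∀ᶠ b in U, m b ∈ X ∧ dist b (m b) = infDist b X := hUa hm
  have hdist : Tendsto (fun b => dist b (m b)) U (𝓝 (dist a x)) :=
    (tendsto_id.mono_left hUa).dist hUx
  have hinf : Tendsto (fun b => infDist b X) U (𝓝 (infDist a X)) :=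
    ((continuous_infDist_pt X).tendsto a).mono_left hUa
  exact huniq x (hX.mem_of_tendsto hUx (hmU.mono fun _ h => h.1))
    (tendsto_nhds_unique (hdist.congr' (hmU.mono fun _ h => h.2)) hinf)

theorem stmt_6_general {n : ℕ} (X : Set (E n)) (hX : IsClosed X)
    (m : E n → E n) (hm : ∀ b ∉ medialAxis X, m b ∈ mSet X b)
    (a : E n) (ha : a ∉ X ∪ closure (medialAxis X)) :
    HasGradientAt (fun b => Metric.infDist b X)
      ((Metric.infDist a X)⁻¹ • (a - m a)) a := by
  have hnear : ∀ᶠ b in 𝓝 a, m b ∈ mSet X b :=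
    (isClosed_closure.isOpen_compl.eventually_mem fun h => ha (Or.inr h)).mono
      fun b hb => hm b fun hbM => hb (subset_closure hbM)
  have hma : m a ∈ mSet X a := hnear.self_of_nhds
  have hunique : ∀ x ∈ X, dist a x = infDist a X → x = m a := fun x hx hax => by
    by_contra hxm
    exact ha (Or.inr (subset_closure ⟨x, ⟨hx, hax⟩, m a, hma, hxm⟩))
  have hcont : ContinuousAt m a := continuousAt_of_eventually_nearest_of_unique hX hnear hunique
  have hsub : a - m a ≠ 0 := sub_ne_zero.mpr fun h => ha (Or.inl (h ▸ hma.1))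
  have hv : (infDist a X)⁻¹ • (a - m a) = normalize (a - m a) := by
    rw [NormedSpace.normalize, ← dist_eq_norm, hma.2]
  rw [hv]
  refine hasGradientAt_of_sub_le_inner (u := fun b => normalize (a - m b))
    (w := fun b => normalize (b - m a)) ?_ ?_ ?_ ?_
  · exact (continuousAt_normalize hsub).tendsto.comp (tendsto_const_nhds.sub hcont)
  · exact (continuousAt_normalize hsub).tendsto.comp (tendsto_id.sub tendsto_const_nhds)
  · filter_upwards [hnear] with b hb using infDist_sub_infDist_le_inner_normalize hb.1 hb.2
  · exact .of_forall fun b => infDist_sub_infDist_le_inner_normalize hma.1 hma.2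

theorem stmt_6 {n : ℕ} (X : Set (E n)) (hX : IsClosed X) (hne : X.Nonempty)
    (m : E n → E n) (hm : ∀ b ∉ medialAxis X, m b ∈ mSet X b)
    (a : E n) (ha : a ∉ X ∪ closure (medialAxis X)) :
    HasGradientAt (fun b => Metric.infDist b X)
      ((Metric.infDist a X)⁻¹ • (a - m a)) a :=
  stmt_6_general X hX m hm a ha
end
end

section
/- Let X ⊆ ℝⁿ be closed and nonempty. The gradient of the distance function d_X is locally Lipschitz on ℝⁿ \ (closure(M_X) ∪ X). -/
set_option maxHeartbeats 1000000


open Metric Set Filter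

open scoped RealInnerProductSpace Topology

noncomputable section

variable {n : ℕ}

lemma exists_mSet {X : Set (E n)} (hX : IsClosed X) (hne : X.Nonempty) (p : E n) :
    ∃ x, x ∈ mSet X p := by
  obtain ⟨x, hxX, hx⟩ := hX.exists_infDist_eq_dist hne p
  exact ⟨x, hxX, hx.symm⟩

lemma mSet_unique {X : Set (E n)} {p x y : E n} (hp : p ∉ medialAxis X)
    (hx : x ∈ mSet X p) (hy : y ∈ mSet X p) : x = y := by
  by_contra hne; exact hp ⟨x, hx, y, hy, hne⟩


lemma mSet_mono {X : Set (E n)} {p q x y : E n} (hx : x ∈ mSet X p) (hy : y ∈ mSet X q) :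
    0 ≤ ⟪x - y, p - q⟫ := by
  have h1 : dist p x ≤ dist p y := hx.2 ▸ infDist_le_dist_of_mem hy.1
  have h2 : dist q y ≤ dist q x := hy.2 ▸ infDist_le_dist_of_mem hx.1
  simp only [dist_eq_norm] at h1 h2
  have e1 : ‖p - x‖^2 ≤ ‖p - y‖^2 := by nlinarith [norm_nonneg (p-x), norm_nonneg (p-y)]
  have e2 : ‖q - y‖^2 ≤ ‖q - x‖^2 := by nlinarith [norm_nonneg (q-y), norm_nonneg (q-x)]
  have f1 := norm_sub_sq_real p x
  have f2 := norm_sub_sq_real p y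
  have f3 := norm_sub_sq_real q y
  have f4 := norm_sub_sq_real q x
  have g : ⟪x - y, p - q⟫ = ⟪p, x⟫ - ⟪q, x⟫ - ⟪p, y⟫ + ⟪q, y⟫ := by
    rw [inner_sub_left, inner_sub_right, inner_sub_right]
    rw [real_inner_comm x p, real_inner_comm x q, real_inner_comm y p, real_inner_comm y q]
    ring
  linarith [e1, e2]

lemma infDist_lip (X : Set (E n)) (p q : E n) :
    |infDist p X - infDist q X| ≤ dist p q := by
  have := (lipschitz_infDist_pt X).dist_le_mul p q
  simpa [Real.dist_eq] using this

lemma infDist_le_quad {X : Set (E n)} {p x : E n} (hx : x ∈ mSet X p)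
    (hd : 0 < infDist p X) (q : E n) :
    infDist q X ≤ infDist p X + ⟪p - x, q - p⟫ / infDist p X
      + ‖q - p‖^2 / (2 * infDist p X) := by
  have hdq : infDist q X ≤ ‖q - x‖ := by
    rw [← dist_eq_norm]; exact infDist_le_dist_of_mem hx.1
  have hpx : ‖p - x‖ = infDist p X := by rw [← dist_eq_norm]; exact hx.2
  have hqx : q - x = (p - x) + (q - p) := by abel
  have hA : (0:ℝ) < ‖p - x‖ := by rw [hpx]; exact hd
  have key : ‖q - x‖ * ‖p - x‖ ≤ ‖p-x‖^2 + ⟪p-x, q-p⟫ + ‖q-p‖^2/2 := by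
    rw [hqx]
    nlinarith [norm_add_sq_real (p-x) (q-p), sq_nonneg (‖(p-x) + (q-p)‖ - ‖p-x‖)]
  have h2 : infDist q X * ‖p - x‖ ≤ ‖p-x‖^2 + ⟪p-x, q-p⟫ + ‖q-p‖^2/2 :=
    le_trans (mul_le_mul_of_nonneg_right hdq hA.le) key
  rw [← hpx, ← sub_nonneg]
  have h4 : ‖p - x‖ + ⟪p-x, q-p⟫ / ‖p - x‖ + ‖q-p‖^2 / (2 * ‖p-x‖) - infDist q X
      = ((‖p-x‖^2 + ⟪p-x, q-p⟫ + ‖q-p‖^2/2) - infDist q X * ‖p-x‖) / ‖p-x‖ := by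
    field_simp
  rw [h4]
  exact div_nonneg (by linarith) hA.le


lemma mSet_cont {X : Set (E n)} (hX : IsClosed X)
    {p x : E n} (hp : p ∉ medialAxis X) (hx : x ∈ mSet X p) {ε : ℝ} (hε : 0 < ε) :
    ∃ δ > 0, ∀ q, dist q p < δ → ∀ y ∈ mSet X q, dist y x < ε := by
  by_contra h
  push_neg at h
  have hch : ∀ k : ℕ, ∃ q, dist q p < 1/(k+1) ∧ ∃ y ∈ mSet X q, ε ≤ dist y x := by
    intro k
    obtain ⟨q, hq1, y, hy, hyx⟩ := h (1/(k+1)) (by positivity)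
    exact ⟨q, hq1, y, hy, hyx⟩
  choose q hq y hy hyx using hch
  have hqp : Tendsto q atTop (𝓝 p) := by
    rw [tendsto_iff_dist_tendsto_zero]
    refine squeeze_zero (fun k => dist_nonneg) (fun k => (hq k).le) ?_
    exact tendsto_one_div_add_atTop_nhds_zero_nat
  have hyb : ∀ k, y k ∈ closedBall p (infDist p X + 3) := by
    intro k
    have h1 : dist (q k) (y k) = infDist (q k) X := (hy k).2
    have h2 : infDist (q k) X ≤ infDist p X + dist (q k) p := infDist_le_infDist_add_dist
    have h3 : dist (q k) p < 1 := lt_of_lt_of_le (hq k) (by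
      rw [div_le_one (by positivity)]; linarith [Nat.cast_nonneg (α := ℝ) k])
    have : dist (y k) p ≤ dist (y k) (q k) + dist (q k) p := dist_triangle _ _ _
    rw [mem_closedBall]
    rw [dist_comm] at h1
    linarith
  obtain ⟨yl, hylB, φ, hφ, hyφ⟩ :=
    (isCompact_closedBall p (infDist p X + 3)).tendsto_subseq hyb
  have hqφ : Tendsto (q ∘ φ) atTop (𝓝 p) := hqp.comp hφ.tendsto_atTop
  have hylX : yl ∈ X := hX.mem_of_tendsto hyφ (Eventually.of_forall fun k => (hy (φ k)).1)
  have hdist : Tendsto (fun k => dist (q (φ k)) (y (φ k))) atTop (𝓝 (dist p yl)) :=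
    hqφ.dist hyφ
  have hinf : Tendsto (fun k => infDist (q (φ k)) X) atTop (𝓝 (infDist p X)) :=
    ((continuous_infDist_pt X).tendsto p).comp hqφ
  have heq : dist p yl = infDist p X := by
    have : (fun k => dist (q (φ k)) (y (φ k))) = fun k => infDist (q (φ k)) X := by
      funext k; exact (hy (φ k)).2
    rw [this] at hdist
    exact tendsto_nhds_unique hdist hinf
  have hylm : yl ∈ mSet X p := ⟨hylX, heq⟩
  have : yl = x := mSet_unique hp hylm hx
  subst this
  have hlim : Tendsto (fun k => dist (y (φ k)) yl) atTop (𝓝 0) := by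
    rw [← dist_self yl]
    exact hyφ.dist tendsto_const_nhds
  have : ε ≤ 0 := ge_of_tendsto hlim (Eventually.of_forall fun k => hyx (φ k))
  linarith


lemma extension {X : Set (E n)} (hX : IsClosed X) (hne : X.Nonempty)
    {z x : E n} {ρ dmin τ : ℝ} (hρ : 0 < ρ) (hdmin : 0 < dmin)
    (hτ : 0 < τ) (hτρ : 4 * τ ≤ ρ) (hτd : 2 * τ ≤ dmin)
    (hsafe : ∀ p ∈ closedBall z ρ, p ∉ medialAxis X ∧ dmin ≤ infDist p X)
    (hx : x ∈ mSet X z) :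
    x ∈ mSet X (z + (τ / infDist z X) • (z - x)) := by
  obtain ⟨hzM, hzd⟩ := hsafe z (mem_closedBall_self hρ.le)
  have hdz : 0 < infDist z X := hdmin.trans_le hzd
  set Φ : E n → ℝ := fun p => ‖p - z‖^2/2 - τ * infDist p X with hΦdef
  have hΦc : ContinuousOn Φ (closedBall z ρ) := by
    apply Continuous.continuousOn
    exact (((continuous_id.sub continuous_const).norm.pow 2).div_const 2).sub
      ((continuous_infDist_pt X).const_smul τ)
  obtain ⟨p, hpB, hpmin⟩ := (isCompact_closedBall z ρ).exists_isMinOn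
    ⟨z, mem_closedBall_self hρ.le⟩ hΦc
  have hpmin' : ∀ q ∈ closedBall z ρ, Φ p ≤ Φ q := fun q hq => hpmin hq
  -- step 1 : ‖p - z‖ ≤ 2τ
  have hΦz : ‖p - z‖^2/2 - τ * infDist p X ≤ - (τ * infDist z X) := by
    simpa [hΦdef] using hpmin' z (mem_closedBall_self hρ.le)
  have hlip := infDist_lip X p z
  rw [abs_le] at hlip
  have hpz : ‖p - z‖ ≤ 2*τ := by
    rw [dist_eq_norm] at hlip
    by_contra hcon; push_neg at hcon
    nlinarith [norm_nonneg (p - z)]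
  -- step 2 setup
  obtain ⟨xp, hxp⟩ := exists_mSet hX hne p
  obtain ⟨hpM, hpd⟩ := hsafe p hpB
  set dp := infDist p X with hdpdef
  have hdp : 0 < dp := hdmin.trans_le hpd
  obtain ⟨u, hu⟩ : ∃ u : E n, u = (dp)⁻¹ • (p - xp) := ⟨_, rfl⟩
  obtain ⟨v, hvdef⟩ : ∃ v : E n, v = (p - z) - τ • u := ⟨_, rfl⟩
  have hnormpx : ‖p - xp‖ = dp := by rw [← dist_eq_norm]; exact hxp.2
  have hnu : ‖u‖ = 1 := by
    rw [hu, norm_smul, Real.norm_eq_abs, abs_of_pos (inv_pos.2 hdp), hnormpx]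
    field_simp
  -- main claim : v = 0
  have hveq : v = 0 := by
    by_contra hv0
    have hnv : 0 < ‖v‖ := norm_pos_iff.2 hv0
    obtain ⟨ε2, hε2⟩ : ∃ e : ℝ, e = dmin * ‖v‖ / (8 * τ) := ⟨_, rfl⟩
    obtain ⟨δ, hδ0, hδ⟩ := mSet_cont hX hpM hxp (show 0 < ε2 by rw [hε2]; positivity)
    obtain ⟨C2, hC2⟩ : ∃ c : ℝ, c = ‖v‖^2 * (1/2 + τ/(2*dmin)) := ⟨_, rfl⟩
    have hC2pos : 0 < C2 := by rw [hC2]; positivity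
    obtain ⟨t, ht⟩ : ∃ t : ℝ, t = min (min ((ρ/2)/‖v‖) (δ/(2*‖v‖))) (min (dmin/(16*τ)) (‖v‖^2/(4*C2))) := ⟨_, rfl⟩
    have hC2ne : C2 ≠ 0 := hC2pos.ne'
    have ht0 : 0 < t := by
      rw [ht]
      have h4C2 : (0:ℝ) < 4*C2 := by linarith
      exact lt_min (lt_min (by positivity) (by positivity))
        (lt_min (by positivity) (div_pos (by positivity) h4C2))
    have ht1 : t ≤ (ρ/2)/‖v‖ := ht ▸ le_trans (min_le_left _ _) (min_le_left _ _)
    have ht2 : t ≤ δ/(2*‖v‖) := ht ▸ le_trans (min_le_left _ _) (min_le_right _ _)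
    have ht3 : t ≤ dmin/(16*τ) := ht ▸ le_trans (min_le_right _ _) (min_le_left _ _)
    have ht4 : t ≤ ‖v‖^2/(4*C2) := ht ▸ le_trans (min_le_right _ _) (min_le_right _ _)
    obtain ⟨qt, hqt⟩ : ∃ q : E n, q = p - t • v := ⟨_, rfl⟩
    have hqtz : qt - z = (p - z) - t • v := by rw [hqt]; abel
    have htv2 : t * ‖v‖ ≤ ρ/2 := by
      calc t*‖v‖ ≤ ((ρ/2)/‖v‖)*‖v‖ := mul_le_mul_of_nonneg_right ht1 (norm_nonneg v)
        _ = ρ/2 := by field_simp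
    have hqtB : qt ∈ closedBall z ρ := by
      rw [mem_closedBall, dist_eq_norm, hqtz]
      have h1 : ‖(p-z) - t•v‖ ≤ ‖p-z‖ + t*‖v‖ := by
        refine le_trans (norm_sub_le _ _) ?_
        rw [norm_smul, Real.norm_eq_abs, abs_of_pos ht0]
      linarith
    obtain ⟨yt, hyt⟩ := exists_mSet hX hne qt
    obtain ⟨hqtM, hqtd⟩ := hsafe qt hqtB
    obtain ⟨dqt, hdqtdef⟩ : ∃ d : ℝ, d = infDist qt X := ⟨_, rfl⟩
    rw [← hdqtdef] at hqtd
    have hdqt : 0 < dqt := hdmin.trans_le hqtd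
    have hpqt : p - qt = t • v := by rw [hqt]; abel
    have hnpqt : ‖p - qt‖ = t * ‖v‖ := by
      rw [hpqt, norm_smul, Real.norm_eq_abs, abs_of_pos ht0]
    obtain ⟨ut, hut⟩ : ∃ w : E n, w = (dqt)⁻¹ • (qt - yt) := ⟨_, rfl⟩
    -- Φ p ≤ Φ qt, unfolded
    have hΦq := hpmin' qt hqtB
    simp only [hΦdef] at hΦq
    rw [← hdqtdef] at hΦq
    -- semiconcavity rearranged
    have hsc := infDist_le_quad hyt (hdqtdef ▸ hdqt) p
    rw [← hdqtdef] at hsc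
    have hscI : ⟪qt - yt, p - qt⟫ / dqt = t * ⟪ut, v⟫ := by
      rw [hpqt, real_inner_smul_right, hut, real_inner_smul_left]
      field_simp
    have hsc2 : dp ≤ dqt + t * ⟪ut, v⟫ + (t*‖v‖)^2 / (2*dqt) := by
      rw [← hscI, ← hnpqt]
      exact hsc
    have hq2 : (t*‖v‖)^2/(2*dqt) ≤ (t*‖v‖)^2/(2*dmin) := by gcongr
    -- expansion of ‖qt - z‖²
    have hexp : ‖qt - z‖^2 = ‖p-z‖^2 - 2*(t*⟪p-z, v⟫) + t^2*‖v‖^2 := by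
      rw [hqtz, norm_sub_sq_real, real_inner_smul_right, norm_smul, Real.norm_eq_abs,
        abs_of_pos ht0, mul_pow]
    have hvv : ‖v‖^2 = ⟪p-z, v⟫ - τ * ⟪u, v⟫ := by
      rw [← real_inner_self_eq_norm_sq]
      nth_rewrite 1 [hvdef]
      rw [inner_sub_left, real_inner_smul_left]
    -- combine: t * ‖v‖² ≤ t * (τ*⟪ut-u,v⟫ + t*C2)
    have hstep : t * ‖v‖^2 ≤ t * (τ*⟪ut - u, v⟫ + t*C2) := by
      have hiuu : ⟪ut - u, v⟫ = ⟪ut, v⟫ - ⟪u, v⟫ := inner_sub_left _ _ _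
      have hmul : τ * (dp - dqt) ≤ τ * (t * ⟪ut, v⟫ + (t*‖v‖)^2/(2*dmin)) := by
        apply mul_le_mul_of_nonneg_left _ hτ.le
        linarith
      have h9 : t*⟪p-z, v⟫ ≤ τ*(dp - dqt) + t^2*‖v‖^2/2 := by linarith [hΦq, hexp]
      have h10 : t*‖v‖^2 = t*⟪p-z, v⟫ - τ*(t*⟪u, v⟫) := by rw [hvv]; ring
      have h11 : τ * (t * ⟪ut, v⟫ + (t*‖v‖)^2/(2*dmin))
          = τ*(t*⟪ut, v⟫) + τ*(t^2*‖v‖^2)/(2*dmin) := by ring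
      have h12 : t * (τ*(⟪ut, v⟫ - ⟪u, v⟫) + t*(‖v‖^2 * (1/2 + τ/(2*dmin))))
          = τ*(t*⟪ut, v⟫) - τ*(t*⟪u, v⟫) + t^2*‖v‖^2/2 + τ*(t^2*‖v‖^2)/(2*dmin) := by
        ring
      rw [hiuu, hC2, h12]
      rw [h11] at hmul
      linarith
    have hfin : ‖v‖^2 ≤ τ*⟪ut - u, v⟫ + t*C2 :=
      le_of_mul_le_mul_left (by linarith) ht0
    -- bound ‖ut - u‖
    have hyxp : ‖yt - xp‖ ≤ ε2 := by
      have hqtp' : dist qt p < δ := by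
        rw [dist_eq_norm, ← norm_sub_rev, hnpqt]
        calc t * ‖v‖ ≤ (δ/(2*‖v‖))*‖v‖ := mul_le_mul_of_nonneg_right ht2 (norm_nonneg v)
          _ = δ/2 := by field_simp
          _ < δ := by linarith
      have := hδ qt hqtp' yt hyt
      rw [dist_eq_norm] at this
      exact this.le
    have hdecomp : ut - u = (dqt)⁻¹ • ((qt - yt) - (p - xp)) + ((dqt)⁻¹ - (dp)⁻¹) • (p - xp) := by
      rw [hut, hu]; module
    have hn2 : ‖(qt - yt) - (p - xp)‖ ≤ t*‖v‖ + ε2 := by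
      have he : (qt - yt) - (p - xp) = (qt - p) - (yt - xp) := by abel
      rw [he]
      refine le_trans (norm_sub_le _ _) ?_
      rw [← norm_sub_rev p qt, hnpqt]
      linarith
    have hlipq := infDist_lip X p qt
    rw [abs_le, dist_eq_norm, hnpqt, ← hdqtdef] at hlipq
    have hn3 : |(dqt)⁻¹ - (dp)⁻¹| * dp ≤ t*‖v‖/dmin := by
      have he : (dqt)⁻¹ - (dp)⁻¹ = (dp - dqt)/(dqt*dp) := by field_simp
      rw [he, abs_div, abs_of_pos (by positivity : (0:ℝ) < dqt*dp)]
      rw [div_mul_eq_mul_div, div_le_div_iff₀ (by positivity) (by positivity)]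
      have h1 : |dp - dqt| ≤ t*‖v‖ := abs_le.mpr ⟨by linarith, by linarith⟩
      have h2 : dmin * dp ≤ dqt * dp := by
        apply mul_le_mul_of_nonneg_right hqtd hdp.le
      calc |dp - dqt| * dp * dmin ≤ (t*‖v‖) * dp * dmin := by
            apply mul_le_mul_of_nonneg_right _ hdmin.le
            exact mul_le_mul_of_nonneg_right h1 hdp.le
        _ = (t*‖v‖) * (dmin * dp) := by ring
        _ ≤ (t*‖v‖) * (dqt * dp) := by
            apply mul_le_mul_of_nonneg_left h2 (by positivity)
    have hn4 : ‖ut - u‖ ≤ (t*‖v‖ + ε2)/dmin + t*‖v‖/dmin := by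
      rw [hdecomp]
      refine le_trans (norm_add_le _ _) ?_
      rw [norm_smul, norm_smul, Real.norm_eq_abs, Real.norm_eq_abs, hnormpx,
        abs_of_pos (inv_pos.2 hdqt)]
      have h5 : (dqt)⁻¹ * ‖(qt - yt) - (p - xp)‖ ≤ (dmin)⁻¹ * (t*‖v‖ + ε2) := by
        apply mul_le_mul (by gcongr) hn2 (norm_nonneg _) (by positivity)
      have h6 : (dmin)⁻¹ * (t*‖v‖ + ε2) = (t*‖v‖ + ε2)/dmin := by ring
      linarith [hn3]
    have htv3 : t * ‖v‖ ≤ dmin * ‖v‖ / (16*τ) := by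
      calc t*‖v‖ ≤ (dmin/(16*τ))*‖v‖ := mul_le_mul_of_nonneg_right ht3 (norm_nonneg v)
        _ = dmin*‖v‖/(16*τ) := by ring
    have hwb : ‖ut - u‖ ≤ ‖v‖/(4*τ) := by
      have : (dmin*‖v‖/(16*τ) + ε2)/dmin + (dmin*‖v‖/(16*τ))/dmin = ‖v‖/(4*τ) := by
        rw [hε2]; field_simp; ring
      calc ‖ut - u‖ ≤ (t*‖v‖ + ε2)/dmin + t*‖v‖/dmin := hn4
        _ ≤ (dmin*‖v‖/(16*τ) + ε2)/dmin + (dmin*‖v‖/(16*τ))/dmin := by gcongr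
        _ = ‖v‖/(4*τ) := this
    have htC2 : t*C2 ≤ ‖v‖^2/4 := by
      calc t*C2 ≤ (‖v‖^2/(4*C2))*C2 := mul_le_mul_of_nonneg_right ht4 hC2pos.le
        _ = ‖v‖^2/4 := by field_simp
    have hiw : ⟪ut - u, v⟫ ≤ ‖ut - u‖ * ‖v‖ := real_inner_le_norm _ _
    have hτw : τ * ⟪ut - u, v⟫ ≤ ‖v‖^2/4 := by
      have h7 : τ * ⟪ut - u, v⟫ ≤ τ * (‖v‖/(4*τ) * ‖v‖) := by
        apply mul_le_mul_of_nonneg_left _ hτ.le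
        exact hiw.trans (mul_le_mul_of_nonneg_right hwb (norm_nonneg v))
      have h8 : τ * (‖v‖/(4*τ) * ‖v‖) = ‖v‖^2/4 := by field_simp
      linarith
    have hv2 : 0 < ‖v‖^2 := by positivity
    linarith [hfin, hτw, htC2]
  -- final algebra
  have hpz2 : p - z = τ • u := by
    have h := hveq
    rw [hvdef] at h
    rwa [sub_eq_zero] at h
  have hzxp : z - xp = ((dp - τ)/dp) • (p - xp) := by
    have he : z - xp = (p - xp) - (p - z) := by abel
    have hs : ((dp - τ)/dp) = 1 - τ * dp⁻¹ := by field_simp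
    rw [he, hpz2, hu, smul_smul, hs, sub_smul, one_smul]
  have hdpτ : 0 < dp - τ := by linarith
  have hnzxp : ‖z - xp‖ = dp - τ := by
    rw [hzxp, norm_smul, Real.norm_eq_abs, abs_of_pos (by positivity), hnormpx]
    field_simp
  have hdzle : infDist z X ≤ dp - τ := by
    rw [← hnzxp, ← dist_eq_norm]; exact infDist_le_dist_of_mem hxp.1
  have hpznorm : ‖p - z‖ = τ := by
    rw [hpz2, norm_smul, Real.norm_eq_abs, abs_of_pos hτ, hnu, mul_one]
  have hdz_eq : infDist z X = dp - τ := by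
    rw [dist_eq_norm, hpznorm] at hlip
    exact le_antisymm hdzle (by linarith)
  have hxpz : xp ∈ mSet X z := ⟨hxp.1, by rw [dist_eq_norm, hnzxp, hdz_eq]⟩
  have hxx : xp = x := mSet_unique hzM hxpz hx
  subst hxx
  have hc : z + (τ / infDist z X) • (z - xp) = p := by
    rw [hdz_eq, hzxp, smul_smul]
    have hss : τ/(dp-τ) * ((dp-τ)/dp) = τ * dp⁻¹ := by field_simp
    rw [hss, mul_smul, ← hu, ← hpz2]
    abel
  rw [hc]; exact hxp


theorem stmt_7 {n : ℕ} (X : Set (E n)) (hX : IsClosed X) (hne : X.Nonempty)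
    (m : E n → E n) (hm : ∀ b ∉ medialAxis X, m b ∈ mSet X b)
    (a : E n) (ha : a ∉ closure (medialAxis X) ∪ X) :
    ∃ ε > 0, ∃ C : NNReal,
      LipschitzOnWith C (fun b => (Metric.infDist b X)⁻¹ • (b - m b))
        (Metric.ball a ε ∩ (closure (medialAxis X) ∪ X)ᶜ) := by
  have hM : IsClosed (closure (medialAxis X) ∪ X) := isClosed_closure.union hX
  have hmemn : (closure (medialAxis X) ∪ X)ᶜ ∈ 𝓝 a := hM.isOpen_compl.mem_nhds ha
  obtain ⟨r, hr0, hrball⟩ := nhds_basis_closedBall.mem_iff.mp hmemn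
  obtain ⟨xa, hxa⟩ := exists_mSet hX hne a
  have hdar : r < infDist a X := by
    by_contra hcon; push_neg at hcon
    have hmem : xa ∈ closedBall a r := by
      rw [mem_closedBall, dist_comm]
      rw [hxa.2]; exact hcon
    exact (hrball hmem) (Or.inr hxa.1)
  obtain ⟨dmin, hdmindef⟩ : ∃ d : ℝ, d = infDist a X - r := ⟨_, rfl⟩
  have hdmin : 0 < dmin := by rw [hdmindef]; linarith
  obtain ⟨ρ, hρdef⟩ : ∃ p : ℝ, p = min (r/4) dmin := ⟨_, rfl⟩
  have hρ0 : 0 < ρ := by rw [hρdef]; exact lt_min (by positivity) hdmin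
  have hρr : ρ ≤ r/4 := hρdef ▸ min_le_left _ _
  have hρd : ρ ≤ dmin := hρdef ▸ min_le_right _ _
  obtain ⟨τ, hτdef⟩ : ∃ t : ℝ, t = ρ/4 := ⟨_, rfl⟩
  have hτ0 : 0 < τ := by rw [hτdef]; positivity
  have hτρ : 4 * τ ≤ ρ := by rw [hτdef]; linarith
  have hτd : 2 * τ ≤ dmin := by rw [hτdef]; linarith
  obtain ⟨D, hDdef⟩ : ∃ d : ℝ, d = infDist a X + r := ⟨_, rfl⟩
  have hD0 : 0 < D := by rw [hDdef]; linarith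
  obtain ⟨C1, hC1def⟩ : ∃ c : ℝ, c = (4*(τ*dmin) + (D+τ)^2)/(τ*dmin)^2 := ⟨_, rfl⟩
  have hC1 : 0 ≤ C1 := by rw [hC1def]; positivity
  refine ⟨τ, hτ0, Real.toNNReal (Real.sqrt C1), ?_⟩
  have hsafe : ∀ p : E n, dist p a ≤ r →
      p ∉ medialAxis X ∧ dmin ≤ infDist p X ∧ infDist p X ≤ D := by
    intro p hp
    have hpc : p ∈ (closure (medialAxis X) ∪ X)ᶜ := hrball (mem_closedBall.mpr hp)
    have h1 : p ∉ medialAxis X := fun h => hpc (Or.inl (subset_closure h))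
    have hl := infDist_lip X p a
    rw [abs_le] at hl
    exact ⟨h1, by rw [hdmindef]; linarith [hl.1], by rw [hDdef]; linarith [hl.2]⟩
  rw [lipschitzOnWith_iff_dist_le_mul]
  intro b hb b' hb'
  have hbr : dist b a ≤ r := by
    have h := mem_ball.mp hb.1
    have : dist b a < τ := h
    linarith
  have hbr' : dist b' a ≤ r := by
    have h := mem_ball.mp hb'.1
    have : dist b' a < τ := h
    linarith
  obtain ⟨hbM, hbd, hbD⟩ := hsafe b hbr
  obtain ⟨hbM', hbd', hbD'⟩ := hsafe b' hbr'
  have hmb := hm b hbM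
  have hmb' := hm b' hbM'
  -- safety for the extension balls
  have hsafeb : ∀ z : E n, dist z a < τ →
      ∀ p ∈ closedBall z ρ, p ∉ medialAxis X ∧ dmin ≤ infDist p X := by
    intro z hz p hp
    have hpa : dist p a ≤ r := by
      have h1 : dist p z ≤ ρ := mem_closedBall.mp hp
      have h2 : dist p a ≤ dist p z + dist z a := dist_triangle _ _ _
      linarith
    obtain ⟨h1, h2, _⟩ := hsafe p hpa
    exact ⟨h1, h2⟩
  -- extensions
  have hext := extension hX hne hρ0 hdmin hτ0 hτρ hτd (hsafeb b (mem_ball.mp hb.1)) hmb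
  have hext' := extension hX hne hρ0 hdmin hτ0 hτρ hτd (hsafeb b' (mem_ball.mp hb'.1)) hmb'
  -- monotonicity
  have hmono := mSet_mono hext hext'
  -- notation
  obtain ⟨db, hdb⟩ : ∃ d : ℝ, d = infDist b X := ⟨_, rfl⟩
  obtain ⟨db', hdb'⟩ : ∃ d : ℝ, d = infDist b' X := ⟨_, rfl⟩
  have hdb0 : 0 < db := by rw [hdb]; exact hdmin.trans_le hbd
  have hdb0' : 0 < db' := by rw [hdb']; exact hdmin.trans_le hbd'
  obtain ⟨u, hu⟩ : ∃ u : E n, u = db⁻¹ • (b - m b) := ⟨_, rfl⟩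
  obtain ⟨u', hu'⟩ : ∃ u : E n, u = db'⁻¹ • (b' - m b') := ⟨_, rfl⟩
  have hnb : ‖b - m b‖ = db := by rw [← dist_eq_norm, hdb]; exact hmb.2
  have hnb' : ‖b' - m b'‖ = db' := by rw [← dist_eq_norm, hdb']; exact hmb'.2
  have hnu : ‖u‖ = 1 := by
    rw [hu, norm_smul, Real.norm_eq_abs, abs_of_pos (inv_pos.2 hdb0), hnb]
    field_simp
  have hnu' : ‖u'‖ = 1 := by
    rw [hu', norm_smul, Real.norm_eq_abs, abs_of_pos (inv_pos.2 hdb0'), hnb']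
    field_simp
  have hbu : b - m b = db • u := by rw [hu, smul_inv_smul₀ hdb0.ne']
  have hbu' : b' - m b' = db' • u' := by rw [hu', smul_inv_smul₀ hdb0'.ne']
  -- rewrite the extension points
  have hcb : b + (τ / infDist b X) • (b - m b) = b + τ • u := by
    rw [← hdb, hbu, smul_smul, div_mul_cancel₀ _ hdb0.ne']
  have hcb' : b' + (τ / infDist b' X) • (b' - m b') = b' + τ • u' := by
    rw [← hdb', hbu', smul_smul, div_mul_cancel₀ _ hdb0'.ne']
  rw [hcb, hcb'] at hmono
  -- goal reduction
  have hgoal : dist ((fun c => (Metric.infDist c X)⁻¹ • (c - m c)) b)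
      ((fun c => (Metric.infDist c X)⁻¹ • (c - m c)) b') = ‖u - u'‖ := by
    simp only []
    rw [dist_eq_norm, hu, hu', hdb, hdb']
  rw [hgoal]
  -- scalar abbreviations
  obtain ⟨dd, hdd⟩ : ∃ d : ℝ, d = dist b b' := ⟨_, rfl⟩
  have hdd0 : 0 ≤ dd := hdd ▸ dist_nonneg
  have hnbb : ‖b - b'‖ = dd := by rw [hdd, dist_eq_norm]
  obtain ⟨vv, hvv⟩ : ∃ v : ℝ, v = ‖u - u'‖ := ⟨_, rfl⟩
  have hvv0 : 0 ≤ vv := hvv ▸ norm_nonneg _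
  -- inner product identities
  have hcc : (b + τ • u) - (b' + τ • u') = (b - b') + τ • (u - u') := by module
  rw [hcc] at hmono
  have hw2 : m b - m b' = (b - b') - db • (u - u') - (db - db') • u' := by
    have h1 : m b = b - db • u := by rw [← hbu]; module
    have h2 : m b' = b' - db' • u' := by rw [← hbu']; module
    rw [h1, h2]; module
  -- norm of m b - m b'
  have hdbd : |db - db'| ≤ dd := by
    rw [hdb, hdb', hdd]; exact infDist_lip X b b'
  have hDb : db ≤ D := by rw [hdb]; exact hbD
  have hwnorm : ‖m b - m b'‖ ≤ 2*dd + D*vv := by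
    rw [hw2]
    have h1 : ‖(b - b') - db • (u - u')‖ ≤ ‖b - b'‖ + ‖db • (u - u')‖ := norm_sub_le _ _
    have h2 : ‖db • (u - u')‖ = db * vv := by
      rw [norm_smul, Real.norm_eq_abs, abs_of_pos hdb0, hvv]
    have h3 : ‖(db - db') • u'‖ = |db - db'| := by
      rw [norm_smul, Real.norm_eq_abs, hnu', mul_one]
    have h4 : db * vv ≤ D * vv := mul_le_mul_of_nonneg_right hDb hvv0
    have h5 : ‖(b - b') - db • (u - u') - (db - db') • u'‖
        ≤ ‖(b - b') - db • (u - u')‖ + ‖(db - db') • u'‖ := norm_sub_le _ _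
    linarith only [h1, h2, h3, h4, h5, hdbd, hnbb]
  -- inner product identities
  have hinner1 : ⟪m b - m b', (b - b') + τ • (u - u')⟫
      = ⟪m b - m b', b - b'⟫ + τ * ⟪m b - m b', u - u'⟫ := by
    rw [inner_add_right, real_inner_smul_right]
  have hi2 : ‖u - u'‖^2 = 2 - 2*⟪u, u'⟫ := by
    rw [norm_sub_sq_real, hnu, hnu']; ring
  have hi3 : ⟪m b - m b', u - u'⟫ = ⟪b - b', u - u'⟫ - (db + db') * (1 - ⟪u, u'⟫) := by
    rw [hw2, inner_sub_left, inner_sub_left, real_inner_smul_left, real_inner_smul_left]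
    have e1 : ⟪u - u', u - u'⟫ = 2 - 2*⟪u,u'⟫ := by
      rw [real_inner_self_eq_norm_sq, hi2]
    have e2 : ⟪u', u - u'⟫ = ⟪u,u'⟫ - 1 := by
      rw [inner_sub_right, real_inner_comm u' u, real_inner_self_eq_norm_sq, hnu']
      ring
    rw [e1, e2]; ring
  have hvv2 : vv^2 = 2 - 2*⟪u,u'⟫ := by rw [hvv, hi2]
  have h1uu : 1 - ⟪u,u'⟫ = vv^2/2 := by linarith
  rw [hinner1, hi3, h1uu] at hmono
  -- Cauchy-Schwarz bounds
  have hcs1 : ⟪m b - m b', b - b'⟫ ≤ (2*dd + D*vv)*dd := by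
    refine le_trans (real_inner_le_norm _ _) ?_
    rw [hnbb]
    exact mul_le_mul_of_nonneg_right hwnorm hdd0
  have hcs2 : ⟪b - b', u - u'⟫ ≤ dd*vv := by
    refine le_trans (real_inner_le_norm _ _) ?_
    rw [hnbb, hvv]
  have hcs2' : τ * ⟪b - b', u - u'⟫ ≤ τ * (dd*vv) := mul_le_mul_of_nonneg_left hcs2 hτ0.le
  have hdd2 : 2*dmin ≤ db + db' := by
    have g1 : dmin ≤ db := by rw [hdb]; exact hbd
    have g2 : dmin ≤ db' := by rw [hdb']; exact hbd'
    linarith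
  -- main quadratic inequality
  have hmain : (τ*dmin)*vv^2 ≤ 2*dd^2 + (D + τ)*(dd*vv) := by
    have hC : (τ*dmin)*vv^2 ≤ τ*((db+db')*(vv^2/2)) := by
      linarith only [mul_nonneg (mul_nonneg hτ0.le (sub_nonneg.mpr hdd2)) (sq_nonneg vv)]
    linarith only [hmono, hcs1, hcs2', hC]
  have hs : 0 < τ*dmin := by positivity
  have hsq : (τ*dmin)^2*vv^2 ≤ (4*(τ*dmin) + (D+τ)^2)*dd^2 := by
    linarith only [sq_nonneg ((D+τ)*dd - (τ*dmin)*vv), mul_le_mul_of_nonneg_left hmain hs.le]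
  have hv2C : vv^2 ≤ C1 * dd^2 := by
    rw [hC1def, div_mul_eq_mul_div, le_div_iff₀ (by positivity)]
    calc vv^2 * (τ*dmin)^2 = (τ*dmin)^2*vv^2 := by ring
      _ ≤ (4*(τ*dmin) + (D+τ)^2)*dd^2 := hsq
  have hfinal : vv ≤ Real.sqrt C1 * dd := by
    calc vv = Real.sqrt (vv^2) := (Real.sqrt_sq hvv0).symm
      _ ≤ Real.sqrt (C1 * dd^2) := Real.sqrt_le_sqrt hv2C
      _ = Real.sqrt C1 * dd := by rw [Real.sqrt_mul hC1, Real.sqrt_sq hdd0]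
  have hcoe : ((Real.sqrt C1).toNNReal : ℝ) = Real.sqrt C1 :=
    Real.coe_toNNReal _ (Real.sqrt_nonneg _)
  rw [hcoe, ← hdd, ← hvv]
  exact hfinal
end
end

section
/- Let X ⊆ ℝⁿ be a closed path-connected set admitting an inner (length) metric d_inn. For any p ∈ X, either p ∈ closure(M_X), or X is Lipschitz Normally Embedded at p, i.e., there exist r > 0 and C > 0 such that d_inn(x,y) ≤ C‖x−y‖ for all x, y ∈ X ∩ B(p,r). -/
open Metric Set Filter

noncomputable section

/-- `γ` is a path in `X` from `x` to `y`, parametrized on `[0,1]`. -/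
def IsPathIn {n : ℕ} (X : Set (E n)) (x y : E n) (γ : ℝ → E n) : Prop :=
  ContinuousOn γ (Set.Icc 0 1) ∧ γ 0 = x ∧ γ 1 = y ∧ ∀ t ∈ Set.Icc 0 1, γ t ∈ X

/-- Length of a curve parametrized on `[0,1]`. -/
def pathLength {n : ℕ} (γ : ℝ → E n) : ENNReal := eVariationOn γ (Set.Icc 0 1)

/-- The inner metric: infimum of lengths of paths in `X` joining `x` and `y`. -/
def dInn {n : ℕ} (X : Set (E n)) (x y : E n) : ENNReal :=
  ⨅ γ ∈ {γ | IsPathIn X x y γ}, pathLength γ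

/-!
Away from the closure of the medial axis every point near `p` has a unique nearest point `π a`
in `X`, and by compactness this uniqueness is uniform: almost nearest points are close to the
nearest one. Marching from `a` along the normal `a - π a` therefore increases the distance to `X`
at a rate close to one, and in the limit the ball of radius `ρ` centred on the normal ray touches
`X` only from outside. This gives Federer's normal inequality
`⟪a - π a, z - π a⟫ ≤ d(a, X) ‖z - π a‖² / 2ρ` for `z ∈ X`, which makes `π` 2-Lipschitz near `p`;
the image under `π` of the segment `[x, y]` is then a path in `X` of length at most `2 ‖x - y‖`.
-/

open scoped RealInnerProductSpace

section Metric

variable {α : Type*} [MetricSpace α]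

def HasUniqueNearestOn (X U : Set α) : Prop :=
  ∀ a ∈ U, {x ∈ X | dist a x = infDist a X}.Subsingleton

theorem HasUniqueNearestOn.exists_pos_dist_lt [ProperSpace α] {X U K : Set α}
    (hX : IsClosed X) (hU : HasUniqueNearestOn X U) (hK : IsCompact K) (hKU : K ⊆ U)
    {η : ℝ} (hη : 0 < η) :
    ∃ ε > 0, ∀ a ∈ K, ∀ z ∈ X, ∀ z' ∈ X, dist a z ≤ infDist a X + ε →
      dist a z' ≤ infDist a X + ε → dist z z' < η := by
  rcases X.eq_empty_or_nonempty with rfl | ⟨x₀, hx₀⟩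
  · exact ⟨1, one_pos, by simp⟩
  obtain ⟨r, hr⟩ := hK.isBounded.subset_closedBall x₀
  set g : α × α × α → ℝ := fun q =>
    max (dist q.1 q.2.1 - infDist q.1 X) (dist q.1 q.2.2 - infDist q.1 X)
  have hg : Continuous g :=
    ((continuous_fst.dist continuous_snd.fst).sub ((continuous_infDist_pt X).comp continuous_fst)).max
      ((continuous_fst.dist continuous_snd.snd).sub ((continuous_infDist_pt X).comp continuous_fst))
  set S := {q : α × α × α | q.1 ∈ K ∧ q.2.1 ∈ X ∧ q.2.2 ∈ X ∧ g q ≤ 1 ∧ η ≤ dist q.2.1 q.2.2}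
  have hS : IsCompact S := by
    have hB := isCompact_closedBall x₀ (2 * r + 1)
    refine (hK.prod (hB.prod hB)).of_isClosed_subset ?_ ?_
    · exact (hK.isClosed.preimage continuous_fst).inter <|
        (hX.preimage continuous_snd.fst).inter <| (hX.preimage continuous_snd.snd).inter <|
        (isClosed_le hg continuous_const).inter
        (isClosed_le continuous_const (continuous_snd.fst.dist continuous_snd.snd))
    · have hfar : ∀ a ∈ K, ∀ z, dist a z - infDist a X ≤ 1 → z ∈ closedBall x₀ (2 * r + 1) := by
        intro a ha z hz
        have hax₀ := mem_closedBall.1 (hr ha)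
        have := infDist_le_dist_of_mem (x := a) hx₀
        rw [mem_closedBall]
        linarith [dist_triangle_left z x₀ a]
      rintro ⟨a, z, z'⟩ ⟨ha, -, -, hg1, -⟩
      exact ⟨ha, hfar a ha z (le_of_max_le_left hg1), hfar a ha z' (le_of_max_le_right hg1)⟩
  have hpos : ∀ q ∈ S, 0 < g q := by
    rintro ⟨a, z, z'⟩ ⟨ha, hz, hz', -, hzz'⟩
    by_contra! hg0
    have hnear : ∀ y ∈ X, dist a y - infDist a X ≤ 0 → dist a y = infDist a X :=
      fun y hy h => le_antisymm (by linarith) (infDist_le_dist_of_mem hy)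
    have : z = z' := hU a (hKU ha) ⟨hz, hnear z hz (le_of_max_le_left hg0)⟩
      ⟨hz', hnear z' hz' (le_of_max_le_right hg0)⟩
    simp only [this, dist_self] at hzz'
    linarith
  obtain ⟨δ, hδ, hδS⟩ := hS.exists_forall_le' hg.continuousOn hpos
  refine ⟨min 1 (δ / 2), by positivity, fun a ha z hz z' hz' hdz hdz' => ?_⟩
  by_contra! hzz'
  have hgε : g (a, z, z') ≤ min 1 (δ / 2) := max_le (by linarith) (by linarith)
  have := hδS (a, z, z') ⟨ha, hz, hz', hgε.trans (min_le_left _ _), hzz'⟩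
  linarith [min_le_right 1 (δ / 2)]

theorem LipschitzWith.exists_ge_of_step {β : Type*} [PseudoMetricSpace β] {φ : β → ℝ}
    (hφ : LipschitzWith 1 φ) {a : β} {ρ ε θ : ℝ} (hε : 0 < ε) (hθ : 0 < θ) (hρ : φ a ≤ ρ)
    (hstep : ∀ c, θ * dist c a ≤ φ c - φ a → φ c < ρ →
      ∃ c', dist c' c ≤ ε ∧ φ c + θ * ε ≤ φ c') :
    ∃ c, ρ ≤ φ c ∧ φ c ≤ ρ + ε ∧ θ * dist c a ≤ φ c - φ a := by
  have hmarch : ∀ k : ℕ, ∃ c, φ c ≤ ρ + ε ∧ θ * dist c a ≤ φ c - φ a ∧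
      (ρ ≤ φ c ∨ φ a + k * (θ * ε) ≤ φ c) := by
    intro k
    induction k with
    | zero => exact ⟨a, by linarith, by simp, Or.inr (by simp)⟩
    | succ k ih =>
      obtain ⟨c, hcρ, hca, hc⟩ := ih
      by_cases hρc : ρ ≤ φ c
      · exact ⟨c, hcρ, hca, Or.inl hρc⟩
      have hck := hc.resolve_left hρc
      obtain ⟨c', hc'c, hgrow⟩ := hstep c hca (not_le.1 hρc)
      have hlip : φ c' ≤ φ c + dist c' c := by simpa using hφ.le_add_mul c' c
      have htri : θ * dist c' a ≤ θ * dist c' c + θ * dist c a := by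
        rw [← mul_add]; exact mul_le_mul_of_nonneg_left (dist_triangle c' c a) hθ.le
      have hθε : θ * dist c' c ≤ θ * ε := mul_le_mul_of_nonneg_left hc'c hθ.le
      refine ⟨c', by linarith, by linarith, Or.inr ?_⟩
      push_cast
      linarith
  obtain ⟨k, hk⟩ := exists_nat_gt ((ρ - φ a) / (θ * ε))
  obtain ⟨c, hcρ, hca, hc⟩ := hmarch k
  refine ⟨c, hc.elim id fun h => ?_, hcρ, hca⟩
  rw [div_lt_iff₀ (by positivity)] at hk
  linarith

end Metric

section InnerProduct

variable {F : Type*} [NormedAddCommGroup F] [InnerProductSpace ℝ F]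

theorem le_infDist_add_smul_sub {X : Set F} {a x : F} {ε ζ : ℝ} (hx : x ∈ X)
    (hax : dist a x = infDist a X) (hd : 0 < dist a x) (hε : 0 < ε) (hζ0 : 0 ≤ ζ) (hζ1 : ζ ≤ 1)
    (hnear : ∀ z ∈ X, dist a z ≤ dist a x + 2 * ε → dist z x ≤ ζ * dist a x) :
    dist a x + (1 - ζ) * ε ≤ infDist (a + (ε / dist a x) • (a - x)) X := by
  set d := dist a x
  set c := a + (ε / d) • (a - x)
  have hstep : ‖(ε / d) • (a - x)‖ = ε := by
    rw [norm_smul, ← dist_eq_norm, Real.norm_of_nonneg (by positivity), div_mul_cancel₀ _ hd.ne']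
  rw [le_infDist ⟨x, hx⟩]
  intro z hz
  have hdz : d ≤ dist a z := hax ▸ infDist_le_dist_of_mem hz
  by_cases hfar : d + 2 * ε ≤ dist a z
  · have : dist a z ≤ ε + dist c z := by
      calc dist a z ≤ dist a c + dist c z := dist_triangle a c z
        _ = ε + dist c z := by
          rw [dist_eq_norm, show a - c = -((ε / d) • (a - x)) by simp [c], norm_neg, hstep]
    nlinarith
  · have hzx := hnear z hz (le_of_not_ge hfar)
    have hinner : d ^ 2 - ζ * d * d ≤ ⟪a - z, a - x⟫ := by
      have hcs : ⟪z - x, a - x⟫ ≤ ζ * d * d := by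
        calc ⟪z - x, a - x⟫ ≤ ‖z - x‖ * ‖a - x‖ := real_inner_le_norm _ _
          _ ≤ ζ * d * d := by
            rw [← dist_eq_norm, ← dist_eq_norm]
            exact mul_le_mul_of_nonneg_right hzx dist_nonneg
      have : ⟪a - z, a - x⟫ = d ^ 2 - ⟪z - x, a - x⟫ := by
        rw [show a - z = (a - x) - (z - x) by abel, inner_sub_left, real_inner_self_eq_norm_sq,
          ← dist_eq_norm]
      linarith
    have hsq : (d + (1 - ζ) * ε) ^ 2 ≤ dist c z ^ 2 := by
      have hexp : dist c z ^ 2 = dist a z ^ 2 + 2 * (ε / d) * ⟪a - z, a - x⟫ + ε ^ 2 := by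
        rw [dist_eq_norm, show c - z = (a - z) + (ε / d) • (a - x) by simp [c]; abel,
          norm_add_sq_real, hstep, inner_smul_right, ← dist_eq_norm]
        ring
      have hlow : 2 * (ε / d) * (d ^ 2 - ζ * d * d) = 2 * ε * d * (1 - ζ) := by
        field_simp
      have := mul_le_mul_of_nonneg_left hinner (by positivity : 0 ≤ 2 * (ε / d))
      have hdz2 : d ^ 2 ≤ dist a z ^ 2 := pow_le_pow_left₀ hd.le hdz 2
      have hζε : ((1 - ζ) * ε) ^ 2 ≤ ε ^ 2 :=
        pow_le_pow_left₀ (by nlinarith) (by nlinarith) 2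
      nlinarith
    exact (pow_le_pow_iff_left₀ (by nlinarith) dist_nonneg two_ne_zero).1 hsq

theorem inner_sub_le_of_dist_add_dist_le {a b x z : F} {ρ : ℝ} (hρ : 0 < ρ)
    (hbax : dist b a + dist a x ≤ ρ) (hbx : ρ ≤ dist b x) (hbz : ρ ≤ dist b z) :
    ⟪a - x, z - x⟫ ≤ dist a x * ‖z - x‖ ^ 2 / (2 * ρ) := by
  have hbx' : dist b x = ρ := le_antisymm ((dist_triangle b a x).trans hbax) hbx
  -- equality in the triangle inequality puts `a` on the segment `[x, b]`
  obtain ⟨t, ⟨ht0, -⟩, hat⟩ : Wbtw ℝ x a b :=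
    (dist_add_dist_eq_iff.1 (le_antisymm (hbax.trans hbx) (dist_triangle b a x))).symm
  have hax : a - x = t • (b - x) := by
    rw [← hat, AffineMap.lineMap_apply, vsub_eq_sub, vadd_eq_add, add_sub_cancel_right]
  have hdist : dist a x = t * ρ := by
    rw [dist_eq_norm, hax, norm_smul, Real.norm_of_nonneg ht0, ← dist_eq_norm, hbx']
  have hbz' : 2 * ⟪b - x, z - x⟫ ≤ ‖z - x‖ ^ 2 := by
    have h := pow_le_pow_left₀ hρ.le hbz 2
    rw [dist_eq_norm, show b - z = (b - x) - (z - x) by abel, norm_sub_sq_real, ← dist_eq_norm,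
      hbx'] at h
    linarith
  rw [hax, real_inner_smul_left, hdist, le_div_iff₀ (by positivity)]
  nlinarith [mul_nonneg (mul_nonneg ht0 hρ.le) (sub_nonneg.2 hbz')]

theorem dist_le_of_inner_le {a b x y : F} {κ : ℝ} (ha : ⟪a - x, y - x⟫ ≤ κ * ‖y - x‖ ^ 2)
    (hb : ⟪b - y, x - y⟫ ≤ κ * ‖x - y‖ ^ 2) : (1 - 2 * κ) * dist x y ≤ dist a b := by
  set w := y - x
  have hxy : dist x y = ‖w‖ := by rw [dist_eq_norm, norm_sub_rev]
  have hsum : ⟪a - x, w⟫ + ⟪b - y, x - y⟫ = ⟪a - b, w⟫ + ‖w‖ ^ 2 := by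
    rw [show x - y = -w by simp [w], inner_neg_right, ← sub_eq_add_neg, ← inner_sub_left,
      show a - x - (b - y) = (a - b) + w by simp [w]; abel, inner_add_left,
      real_inner_self_eq_norm_sq]
  have hcs : -⟪a - b, w⟫ ≤ dist a b * ‖w‖ := by
    rw [dist_eq_norm]
    exact (neg_le_abs _).trans (abs_real_inner_le_norm _ _)
  rw [norm_sub_rev] at hb
  have hw : (1 - 2 * κ) * ‖w‖ ^ 2 ≤ dist a b * ‖w‖ := by linarith
  rw [hxy]
  rcases (norm_nonneg w).eq_or_lt with h0 | h0
  · rw [← h0, mul_zero]; exact dist_nonneg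
  · nlinarith

theorem LipschitzOnWith.eVariationOn_comp_lineMap_le {G : Type*} [PseudoEMetricSpace G]
    {f : F → G} {K : NNReal} {s : Set F} (hf : LipschitzOnWith K f s) (hs : Convex ℝ s)
    {x y : F} (hx : x ∈ s) (hy : y ∈ s) :
    eVariationOn (f ∘ AffineMap.lineMap x y) (Icc (0 : ℝ) 1) ≤ K * edist x y := by
  have hid : eVariationOn (id : ℝ → ℝ) (Icc 0 1) = 1 := by
    rw [← inter_self (Icc (0 : ℝ) 1), monotoneOn_id.eVariationOn_eq (by simp) (by simp)]
    simp
  calc eVariationOn (f ∘ AffineMap.lineMap x y) (Icc (0 : ℝ) 1)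
      ≤ K * eVariationOn (AffineMap.lineMap x y ∘ id) (Icc (0 : ℝ) 1) :=
        hf.comp_eVariationOn_le fun t ht => hs.lineMap_mem hx hy ht
    _ ≤ K * (nndist x y * eVariationOn (id : ℝ → ℝ) (Icc 0 1)) := by
        gcongr
        exact (lipschitzWith_lineMap x y).lipschitzOnWith.comp_eVariationOn_le (mapsTo_id _)
    _ = K * edist x y := by rw [hid, mul_one, edist_nndist]

end InnerProduct

section Projection

variable {F : Type*} [NormedAddCommGroup F] [ProperSpace F] {X U : Set F}

def nearestPt (X : Set F) (a : F) : F :=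
  Classical.epsilon fun x => x ∈ X ∧ dist a x = infDist a X

theorem nearestPt_spec (hX : IsClosed X) (hne : X.Nonempty) (a : F) :
    nearestPt X a ∈ X ∧ dist a (nearestPt X a) = infDist a X := by
  obtain ⟨x, hx, hax⟩ := hX.exists_infDist_eq_dist hne a
  exact Classical.epsilon_spec (p := fun x => x ∈ X ∧ dist a x = infDist a X) ⟨x, hx, hax.symm⟩

theorem nearestPt_mem (hX : IsClosed X) (hne : X.Nonempty) (a : F) : nearestPt X a ∈ X :=
  (nearestPt_spec hX hne a).1

theorem dist_nearestPt (hX : IsClosed X) (hne : X.Nonempty) (a : F) :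
    dist a (nearestPt X a) = infDist a X :=
  (nearestPt_spec hX hne a).2

theorem nearestPt_eq_self (hX : IsClosed X) {x : F} (hx : x ∈ X) : nearestPt X x = x := by
  have h := dist_nearestPt hX ⟨x, hx⟩ x
  rw [infDist_zero_of_mem hx] at h
  exact (dist_eq_zero.1 h).symm

variable [InnerProductSpace ℝ F]

namespace HasUniqueNearestOn

variable (hX : IsClosed X) (hU : HasUniqueNearestOn X U)
include hX hU

/-- Marching from `a` in small steps along the normal at the current nearest point, `infDist · X`
grows at rate almost one, because on the compact ball almost nearest points are close to the
nearest one. -/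
theorem exists_le_infDist_dist_le_sub_add {a : F} {ρ δ : ℝ} (hρ : 0 < ρ)
    (hK : closedBall a (2 * ρ) ⊆ U) (hd0 : 0 < infDist a X) (hdρ : infDist a X ≤ ρ)
    (hδ : 0 < δ) (hδρ : δ ≤ ρ) :
    ∃ c, ρ ≤ infDist c X ∧ dist c a ≤ ρ - infDist a X + δ := by
  have hne : X.Nonempty := by
    by_contra h
    rw [not_nonempty_iff_eq_empty.1 h, infDist_empty] at hd0
    exact lt_irrefl 0 hd0
  set d := infDist a X
  set ζ := δ / (8 * ρ)
  have hζ0 : 0 < ζ := by positivity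
  have hζ : ζ ≤ 1 / 8 := by
    rw [div_le_iff₀ (by positivity)]; linarith
  obtain ⟨ε₁, hε₁, hnear⟩ :=
    hU.exists_pos_dist_lt hX (isCompact_closedBall a (2 * ρ)) hK (η := ζ * d) (by positivity)
  set ε := min (ε₁ / 2) (δ / 2)
  have hε : 0 < ε := by positivity
  have hεε₁ : 2 * ε ≤ ε₁ := by linarith [min_le_left (ε₁ / 2) (δ / 2)]
  have hεδ : ε ≤ δ / 2 := min_le_right _ _
  obtain ⟨c, hρc, hcρ, hca⟩ := (lipschitz_infDist_pt X).exists_ge_of_step hε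
    (by linarith : (0 : ℝ) < 1 - ζ) hdρ <| by
    intro c hca hcρ
    have hdc : d ≤ infDist c X := by nlinarith [dist_nonneg (x := c) (y := a)]
    have hcK : c ∈ closedBall a (2 * ρ) := by
      rw [mem_closedBall]; nlinarith [dist_nonneg (x := c) (y := a)]
    set x := nearestPt X c
    have hcx : dist c x = infDist c X := dist_nearestPt hX hne c
    refine ⟨c + (ε / dist c x) • (c - x), ?_, ?_⟩
    · rw [dist_eq_norm, add_sub_cancel_left, norm_smul, ← dist_eq_norm,
        Real.norm_of_nonneg (by positivity), div_mul_cancel₀ _ (by linarith)]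
    · rw [← hcx]
      refine le_infDist_add_smul_sub (nearestPt_mem hX hne c) hcx (by linarith) hε hζ0.le
        (by linarith) fun z hz hcz => ?_
      have := hnear c hcK z hz x (nearestPt_mem hX hne c) (by linarith) (by linarith)
      nlinarith
  refine ⟨c, hρc, ?_⟩
  have hca2 : dist c a ≤ 2 * ρ := by nlinarith [dist_nonneg (x := c) (y := a)]
  have : ζ * dist c a ≤ δ / 4 := by
    calc ζ * dist c a ≤ ζ * (2 * ρ) := mul_le_mul_of_nonneg_left hca2 hζ0.le
      _ = δ / 4 := by simp only [ζ]; field_simp; ring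
  nlinarith

/-- The limit of the march: the open ball of radius `ρ` about `b` misses `X` and passes through
the nearest point of `a`. -/
theorem exists_le_infDist_dist_le_sub {a : F} {ρ : ℝ} (hρ : 0 < ρ)
    (hK : closedBall a (2 * ρ) ⊆ U) (hd0 : 0 < infDist a X) (hdρ : infDist a X ≤ ρ) :
    ∃ b, ρ ≤ infDist b X ∧ dist b a ≤ ρ - infDist a X := by
  set h : F → ℝ := fun c => max (ρ - infDist c X) (dist c a - (ρ - infDist a X))
  have hh : Continuous h :=
    (continuous_const.sub (continuous_infDist_pt X)).max
      ((continuous_id.dist continuous_const).sub continuous_const)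
  obtain ⟨b, -, hb⟩ := (isCompact_closedBall a (2 * ρ)).exists_isMinOn
    ⟨a, mem_closedBall_self (by positivity)⟩ hh.continuousOn
  have hb0 : h b ≤ 0 := by
    refine le_of_forall_gt_imp_ge_of_dense fun δ hδ => ?_
    obtain ⟨c, hρc, hca⟩ := exists_le_infDist_dist_le_sub_add hX hU hρ hK hd0 hdρ
      (lt_min hδ hρ) (min_le_right δ ρ)
    have hcK : c ∈ closedBall a (2 * ρ) := by
      rw [mem_closedBall]; linarith [min_le_right δ ρ, infDist_nonneg (x := a) (s := X)]
    exact (hb hcK).trans (max_le (by linarith) (by linarith [min_le_left δ ρ]))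
  exact ⟨b, by linarith [le_max_left (ρ - infDist b X) (dist b a - (ρ - infDist a X))],
    by linarith [le_max_right (ρ - infDist b X) (dist b a - (ρ - infDist a X))]⟩

theorem inner_sub_nearestPt_le {a z : F} {ρ : ℝ} (hρ : 0 < ρ)
    (hK : closedBall a (2 * ρ) ⊆ U) (hdρ : infDist a X ≤ ρ) (hz : z ∈ X) :
    ⟪a - nearestPt X a, z - nearestPt X a⟫ ≤
      infDist a X * ‖z - nearestPt X a‖ ^ 2 / (2 * ρ) := by
  have hne : X.Nonempty := ⟨z, hz⟩
  have hax := dist_nearestPt hX hne a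
  rcases (infDist_nonneg : 0 ≤ infDist a X).eq_or_lt with hd0 | hd0
  · rw [← hd0, dist_eq_zero] at hax
    simp [← hax, ← hd0]
  obtain ⟨b, hρb, hba⟩ := exists_le_infDist_dist_le_sub hX hU hρ hK hd0 hdρ
  rw [← hax]
  exact inner_sub_le_of_dist_add_dist_le hρ (by linarith)
    (hρb.trans (infDist_le_dist_of_mem (nearestPt_mem hX hne a)))
    (hρb.trans (infDist_le_dist_of_mem hz))

end HasUniqueNearestOn

theorem HasUniqueNearestOn.lipschitzOnWith_nearestPt {p : F} {R : ℝ} (hX : IsClosed X)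
    (hp : p ∈ X) (hU : HasUniqueNearestOn X (ball p R)) :
    LipschitzOnWith 2 (nearestPt X) (ball p (R / 8)) := by
  -- the normal inequality with tangent balls of radius `R / 4` and `κ = 1 / 4`
  have hquarter : ∀ c ∈ ball p (R / 8), ∀ y ∈ X,
      ⟪c - nearestPt X c, y - nearestPt X c⟫ ≤ 1 / 4 * ‖y - nearestPt X c‖ ^ 2 := by
    intro c hc y hy
    have hcp : dist c p < R / 8 := hc
    have hR : 0 < R := by linarith [dist_nonneg (x := c) (y := p)]
    have hcX : infDist c X ≤ dist c p := infDist_le_dist_of_mem hp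
    refine (hU.inner_sub_nearestPt_le hX (by positivity : 0 < R / 4)
      (closedBall_subset_ball' (by linarith)) (by linarith) hy).trans ?_
    rw [div_le_iff₀ (by positivity)]
    nlinarith [sq_nonneg ‖y - nearestPt X c‖]
  refine LipschitzOnWith.of_dist_le_mul fun a ha b hb => ?_
  have := dist_le_of_inner_le (hquarter a ha _ (nearestPt_mem hX ⟨p, hp⟩ b))
    (hquarter b hb _ (nearestPt_mem hX ⟨p, hp⟩ a))
  push_cast
  linarith

end Projection

theorem exists_hasUniqueNearestOn_ball {n : ℕ} {X : Set (E n)} {p : E n}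
    (hp : p ∉ closure (medialAxis X)) : ∃ R > 0, HasUniqueNearestOn X (ball p R) := by
  obtain ⟨R, hR, hfar⟩ : ∃ R > 0, ∀ a ∈ medialAxis X, R ≤ dist p a := by
    simpa [Metric.mem_closure_iff] using hp
  refine ⟨R, hR, fun a ha z hz z' hz' => ?_⟩
  by_contra hne
  exact (mem_ball'.1 ha).not_ge (hfar a ⟨z, hz, z', hz', hne⟩)

theorem stmt_9_general {n : ℕ} (X : Set (E n)) (hX : IsClosed X)
    (p : E n) (hp : p ∈ X) :
    p ∈ closure (medialAxis X) ∨
      ∃ r > (0:ℝ), ∃ C > (0:ℝ), ∀ x ∈ X ∩ Metric.ball p r, ∀ y ∈ X ∩ Metric.ball p r,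
        dInn X x y ≤ ENNReal.ofReal (C * dist x y) := by
  refine or_iff_not_imp_left.2 fun hmed => ?_
  obtain ⟨R, hR, hU⟩ := exists_hasUniqueNearestOn_ball hmed
  have hπ := hU.lipschitzOnWith_nearestPt hX hp
  refine ⟨R / 8, by positivity, 2, two_pos, ?_⟩
  rintro x ⟨hxX, hx⟩ y ⟨hyX, hy⟩
  have hpath : IsPathIn X x y (nearestPt X ∘ AffineMap.lineMap x y) :=
    ⟨hπ.continuousOn.comp (AffineMap.lineMap_continuous.continuousOn)
        fun t ht => (convex_ball p _).lineMap_mem hx hy ht,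
      by simp [nearestPt_eq_self hX hxX], by simp [nearestPt_eq_self hX hyX],
      fun t _ => nearestPt_mem hX ⟨p, hp⟩ _⟩
  calc dInn X x y ≤ pathLength (nearestPt X ∘ AffineMap.lineMap x y) := iInf₂_le _ hpath
    _ ≤ 2 * edist x y := hπ.eVariationOn_comp_lineMap_le (convex_ball p _) hx hy
    _ = ENNReal.ofReal (2 * dist x y) := by
      rw [ENNReal.ofReal_mul zero_le_two, edist_dist]; simp

theorem stmt_9 {n : ℕ} (X : Set (E n)) (hX : IsClosed X) (hpc : IsPathConnected X)
    (p : E n) (hp : p ∈ X) :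
    p ∈ closure (medialAxis X) ∨
      ∃ r > (0:ℝ), ∃ C > (0:ℝ), ∀ x ∈ X ∩ Metric.ball p r, ∀ y ∈ X ∩ Metric.ball p r,
        dInn X x y ≤ ENNReal.ofReal (C * dist x y) :=
  stmt_9_general X hX p hp
end
end

section
/- Let X ⊆ ℝⁿ be closed, p ∈ X, and suppose B(p,r) is disjoint from closure(M_X). Then any two points x, y ∈ B(p,r) ∩ X are joined by at least one rectifiable path contained in X; hence the inner metric on X is well-defined locally around p. -/
open scoped Topology RealInnerProductSpace
open Metric Set Filter

set_option maxHeartbeats 1000000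

noncomputable section

namespace Stmt10


variable {n : ℕ} {X : Set (E n)} {p : E n} {r : ℝ}

/-- A choice of nearest point. -/
noncomputable def nrp (X : Set (E n)) (z : E n) : E n :=
  open Classical in
  if h : ∃ q ∈ X, Metric.infDist z X = dist z q then h.choose else z

lemma nrp_mem_mSet (hX : IsClosed X) (hne : X.Nonempty) (z : E n) :
    nrp X z ∈ mSet X z := by
  have h : ∃ q ∈ X, Metric.infDist z X = dist z q := hX.exists_infDist_eq_dist hne z
  rw [nrp, dif_pos h]
  exact ⟨h.choose_spec.1, h.choose_spec.2.symm⟩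

lemma nrp_mem (hX : IsClosed X) (hne : X.Nonempty) (z : E n) : nrp X z ∈ X :=
  (nrp_mem_mSet hX hne z).1

lemma dist_nrp (hX : IsClosed X) (hne : X.Nonempty) (z : E n) :
    dist z (nrp X z) = infDist z X := (nrp_mem_mSet hX hne z).2

lemma not_medial (hdisj : Metric.ball p r ∩ closure (medialAxis X) = ∅)
    {z : E n} (hz : z ∈ ball p r) : z ∉ medialAxis X := fun h =>
  (eq_empty_iff_forall_notMem.mp hdisj z) ⟨hz, subset_closure h⟩

lemma eq_nrp (hX : IsClosed X) (hne : X.Nonempty) {z a : E n}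
    (hz : z ∉ medialAxis X) (ha : a ∈ mSet X z) : a = nrp X z := by
  by_contra hab
  exact hz ⟨a, ha, nrp X z, nrp_mem_mSet hX hne z, hab⟩

lemma nrp_self (hX : IsClosed X) (hne : X.Nonempty) {z : E n}
    (hz : z ∉ medialAxis X) (hzX : z ∈ X) : nrp X z = z :=
  (eq_nrp hX hne hz ⟨hzX, by simp [Metric.infDist_zero_of_mem hzX]⟩).symm

/-- Continuity of the nearest-point map at points with a unique nearest point. -/
lemma continuousAt_nrp (hX : IsClosed X) (hne : X.Nonempty) {z : E n}
    (hz : z ∉ medialAxis X) : ContinuousAt (nrp X) z := by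
  rw [ContinuousAt, tendsto_iff_seq_tendsto]
  intro u hu
  apply tendsto_of_subseq_tendsto
  intro ns hns
  set v : ℕ → E n := fun i => u (ns i) with hv
  have hvz : Tendsto v atTop (𝓝 z) := hu.comp hns
  have hdist : Tendsto (fun i => dist (v i) (nrp X (v i))) atTop (𝓝 (infDist z X)) := by
    have h1 : ∀ i, dist (v i) (nrp X (v i)) = infDist (v i) X := fun i => dist_nrp hX hne _
    simp only [h1]
    exact ((continuous_infDist_pt X).tendsto z).comp hvz
  -- boundedness of the nearest points
  have hb : Tendsto (fun i => dist (v i) (nrp X (v i)) + dist (v i) z) atTop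
      (𝓝 (infDist z X + 0)) := hdist.add (tendsto_iff_dist_tendsto_zero.mp hvz)
  obtain ⟨R, hR⟩ := hb.bddAbove_range
  have hmem : ∀ i, nrp X (v i) ∈ X ∩ closedBall z R := by
    intro i
    refine ⟨nrp_mem hX hne _, ?_⟩
    have : dist (nrp X (v i)) z ≤ dist (v i) (nrp X (v i)) + dist (v i) z := by
      rw [dist_comm (v i) (nrp X (v i))]; exact dist_triangle _ _ _
    exact mem_closedBall.mpr (this.trans (hR ⟨i, rfl⟩))
  have hcpt : IsCompact (X ∩ closedBall z R) :=
    (isCompact_closedBall z R).inter_left hX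
  obtain ⟨q, hq, φ, hφ, hqlim⟩ := hcpt.tendsto_subseq hmem
  refine ⟨φ, ?_⟩
  have hq2 : q ∈ mSet X z := by
    refine ⟨hq.1, ?_⟩
    have l1 : Tendsto (fun i => dist (v (φ i)) (nrp X (v (φ i)))) atTop (𝓝 (dist z q)) :=
      (hvz.comp hφ.tendsto_atTop).dist hqlim
    have l2 : Tendsto (fun i => dist (v (φ i)) (nrp X (v (φ i)))) atTop (𝓝 (infDist z X)) :=
      hdist.comp hφ.tendsto_atTop
    exact tendsto_nhds_unique l1 l2
  have : q = nrp X z := eq_nrp hX hne hz hq2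
  rw [← this]
  exact hqlim

noncomputable def euler (X : Set (E n)) (h : ℝ) (w : E n) : ℕ → E n
  | 0 => w
  | (k+1) => euler X h w k +
      h • ((infDist (euler X h w k) X)⁻¹ • (euler X h w k - nrp X (euler X h w k)))

lemma euler_zero (h : ℝ) (w : E n) : euler X h w 0 = w := rfl

lemma euler_succ (h : ℝ) (w : E n) (k : ℕ) : euler X h w (k+1) = euler X h w k +
    h • ((infDist (euler X h w k) X)⁻¹ • (euler X h w k - nrp X (euler X h w k))) := rfl

lemma ray_extension (hX : IsClosed X) (hp : p ∈ X)
    (hdisj : Metric.ball p r ∩ closure (medialAxis X) = ∅)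
    {w : E n} (hw : w ∈ ball p r) (hL : 0 < infDist w X)
    {T : ℝ} (hT : 0 ≤ T) (hroom : dist p w + T < r) :
    infDist (w + T • ((infDist w X)⁻¹ • (w - nrp X w))) X = infDist w X + T := by
  have hne : X.Nonempty := ⟨p, hp⟩
  set L : ℝ := infDist w X with hLdef
  set m : E n := nrp X w with hmdef
  set v : E n := L⁻¹ • (w - m) with hvdef
  have hwm : ‖w - m‖ = L := by
    rw [← dist_eq_norm]; exact dist_nrp hX hne w
  have hv1 : ‖v‖ = 1 := by
    rw [hvdef, norm_smul, hwm, norm_inv, Real.norm_eq_abs, abs_of_pos hL]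
    field_simp
  clear_value v
  clear_value L m
  -- trivial case T = 0
  rcases eq_or_lt_of_le hT with hT0 | hT0
  · rw [← hT0, zero_smul, add_zero, add_zero]
    exact hLdef.symm
  -- Claim B : approximate points via Euler polygon
  have claimB : ∀ ε : ℝ, 0 < ε → ε ≤ L/4 →
      ∃ z : E n, dist z w ≤ T ∧ L + T - 2*T*ε/L ≤ infDist z X := by
    intro ε hε hε4
    set K : Set (E n) := closedBall w T ∩ {z | L/2 ≤ infDist z X} with hKdef
    have hKc : IsCompact K := (isCompact_closedBall w T).inter_right
      (isClosed_le continuous_const (continuous_infDist_pt X))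
    have hKball : ∀ z ∈ K, z ∈ ball p r := by
      intro z hz
      have h1 : dist z w ≤ T := mem_closedBall.mp hz.1
      have : dist p z ≤ dist p w + dist w z := dist_triangle _ _ _
      rw [mem_ball, dist_comm]
      rw [dist_comm w z] at this
      linarith
    have hcont : ContinuousOn (nrp X) K := fun z hz =>
      (continuousAt_nrp hX hne (not_medial hdisj (hKball z hz))).continuousWithinAt
    have hUC := hKc.uniformContinuousOn_of_continuous hcont
    rw [Metric.uniformContinuousOn_iff] at hUC
    obtain ⟨δ, hδ0, hUCd⟩ := hUC ε hε
    -- choose step size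
    set c : ℝ := min δ (L/4) with hcdef
    have hc0 : 0 < c := lt_min hδ0 (by linarith)
    obtain ⟨N, hN⟩ := exists_nat_gt (T / c)
    have hTc : 0 < T / c := div_pos hT0 hc0
    have hN0 : 0 < (N:ℝ) := lt_trans hTc hN
    have hN0' : (N:ℝ) ≠ 0 := ne_of_gt hN0
    set h : ℝ := T / N with hhdef
    have hh0 : 0 < h := div_pos hT0 hN0
    have hhc : h < c := by
      rw [hhdef, div_lt_iff₀ hN0]
      calc T = (T/c) * c := by field_simp
      _ < N * c := by exact mul_lt_mul_of_pos_right hN hc0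
      _ = c * N := by ring
    have hhδ : h < δ := lt_of_lt_of_le hhc (min_le_left _ _)
    have hh4 : h ≤ L/4 := le_of_lt (lt_of_lt_of_le hhc (min_le_right _ _))
    have hNh : (N:ℝ) * h = T := by rw [hhdef]; field_simp
    -- Euler polygon
    have hζ0 : euler X h w 0 = w := euler_zero h w
    have hcoef : 0 ≤ 1 - 2*ε/L := by
      have : 2*ε/L ≤ 1/2 := by rw [div_le_iff₀ hL]; linarith
      linarith
    have main : ∀ k : ℕ, k ≤ N →
        dist (euler X h w k) w ≤ k * h ∧ L + k * h * (1 - 2*ε/L) ≤ infDist (euler X h w k) X := by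
      intro k
      induction k with
      | zero => intro _; constructor
                · simp [hζ0]
                · rw [hζ0, ← hLdef]; simp
      | succ k IH =>
        intro hkN
        have hkN' : k ≤ N := Nat.le_of_succ_le hkN
        obtain ⟨IH1, IH2⟩ := IH hkN'
        set z : E n := euler X h w k with hzdef
        set d : ℝ := infDist z X with hddef
        set mz : E n := nrp X z with hmzdef
        have hkh0 : 0 ≤ (k:ℝ) * h * (1 - 2*ε/L) := by positivity
        have hdL : L ≤ d := by linarith
        have hd0 : 0 < d := lt_of_lt_of_le hL hdL
        have hnzm : ‖z - mz‖ = d := by rw [← dist_eq_norm]; exact dist_nrp hX hne z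
        set uz : E n := d⁻¹ • (z - mz) with huzdef
        have hu1 : ‖uz‖ = 1 := by
          rw [huzdef, norm_smul, hnzm, norm_inv, Real.norm_eq_abs, abs_of_pos hd0]
          field_simp
        set z' : E n := euler X h w (k+1) with hz'def
        have hz'eq : z' = z + h • uz := euler_succ h w k
        clear_value z z' uz mz d
        have hdzz' : dist z' z = h := by
          rw [hz'eq, dist_eq_norm, add_sub_cancel_left, norm_smul, hu1,
            Real.norm_eq_abs, abs_of_pos hh0, mul_one]
        have hkhN : (k:ℝ) * h ≤ T ∧ ((k:ℝ)+1) * h ≤ T := by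
          constructor
          · rw [← hNh]
            apply mul_le_mul_of_nonneg_right _ (le_of_lt hh0)
            exact_mod_cast hkN'
          · rw [← hNh]
            apply mul_le_mul_of_nonneg_right _ (le_of_lt hh0)
            exact_mod_cast hkN
        have hzw : dist z w ≤ (k:ℝ) * h := IH1
        have hz'w : dist z' w ≤ ((k:ℝ)+1) * h := by
          calc dist z' w ≤ dist z' z + dist z w := dist_triangle _ _ _
          _ ≤ h + (k:ℝ)*h := by linarith [hdzz'.le]
          _ = ((k:ℝ)+1)*h := by ring
        have hzK : z ∈ K := by
          refine ⟨mem_closedBall.mpr (hzw.trans hkhN.1), ?_⟩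
          simp only [mem_setOf_eq]; linarith
        have hdz' : d - h ≤ infDist z' X := by
          have := infDist_le_infDist_add_dist (x := z) (y := z') (s := X)
          rw [dist_comm] at hdzz'
          rw [hdzz'] at this
          linarith
        have hz'K : z' ∈ K := by
          refine ⟨mem_closedBall.mpr (hz'w.trans hkhN.2), ?_⟩
          simp only [mem_setOf_eq]; linarith
        -- uniform continuity
        set q : E n := nrp X z' with hqdef
        have hqX : q ∈ X := nrp_mem hX hne z'
        have hUCzz' : dist mz q < ε := by
          rw [hmzdef, hqdef]
          exact hUCd z hzK z' hz'K (by rw [dist_comm] at hdzz'; rw [hdzz']; exact hhδ)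
        have e1 : d ≤ ‖z - q‖ := by
          rw [hddef, ← dist_eq_norm]; exact infDist_le_dist_of_mem hqX
        have e2 : (inner (𝕜 := ℝ) (uz) (z - mz) : ℝ) = d := by
          rw [huzdef, real_inner_smul_left, real_inner_self_eq_norm_sq, hnzm]
          field_simp
        have e3 : -ε ≤ (inner (𝕜 := ℝ) (uz) (mz - q) : ℝ) := by
          have habs := abs_real_inner_le_norm (uz) (mz - q)
          rw [hu1, one_mul] at habs
          have : ‖mz - q‖ < ε := by rw [← dist_eq_norm]; exact hUCzz'
          have := abs_le.mp (le_of_lt (lt_of_le_of_lt habs this))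
          linarith [this.1]
        have e4 : d - ε ≤ (inner (𝕜 := ℝ) (uz) (z - q) : ℝ) := by
          have hsplit : z - q = (z - mz) + (mz - q) := by abel
          rw [hsplit, inner_add_right, e2]
          linarith
        have e5 : ‖z' - q‖^2 = ‖z - q‖^2 + 2*h*(inner (𝕜 := ℝ) (uz) (z - q) : ℝ) + h^2 := by
          have : z' - q = (z - q) + h • uz := by rw [hz'eq]; abel
          rw [this, norm_add_sq_real, real_inner_smul_right, norm_smul,
            Real.norm_eq_abs, abs_of_pos hh0, hu1, mul_one]
          rw [real_inner_comm]
          ring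
        set ip : ℝ := (inner (𝕜 := ℝ) (uz) (z - q) : ℝ) with hipdef
        set nzq : ℝ := ‖z - q‖ with hnzqdef
        set nq : ℝ := ‖z' - q‖ with hnqdef
        have hnq0 : 0 ≤ nq := by rw [hnqdef]; positivity
        have hnzq0 : 0 ≤ nzq := by rw [hnzqdef]; positivity
        have hfin : infDist z' X = nq := by
          rw [hnqdef, ← dist_eq_norm, hqdef]; exact (dist_nrp hX hne z').symm
        clear_value ip nzq nq q
        have hsq : (d + h)^2 - 2*h*ε ≤ nq^2 := by
          have h1 : d^2 ≤ nzq^2 := pow_le_pow_left₀ (le_of_lt hd0) e1 2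
          have l1 : 2*h*(d-ε) ≤ 2*h*ip := mul_le_mul_of_nonneg_left e4 (by positivity)
          have ex1 : (d+h)^2 = d^2 + 2*h*(d-ε) + h^2 + 2*h*ε := by ring
          linarith [l1, h1, e5, ex1]
        have hble : d + h - 2*h*ε/L ≤ nq := by
          set s : ℝ := 2*h*ε/L with hsdef
          have hs0 : 0 ≤ s := by positivity
          have hsL : s * L = 2*h*ε := by rw [hsdef]; field_simp
          have hs4 : s ≤ h/2 := by
            rw [hsdef, div_le_iff₀ hL]
            have : h*ε ≤ h*(L/4) := mul_le_mul_of_nonneg_left hε4 (le_of_lt hh0)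
            linarith
          have hb0 : 0 ≤ d + h - s := by linarith
          have hkey : s * s ≤ s * (2*(d+h) - L) :=
            mul_le_mul_of_nonneg_left (by linarith) hs0
          have hbsq : (d + h - s)^2 ≤ (d+h)^2 - 2*h*ε := by
            have ex2 : (d + h - s)^2 = (d+h)^2 - 2*(d+h)*s + s*s := by ring
            have ex3 : s*(2*(d+h) - L) = 2*(d+h)*s - s*L := by ring
            linarith [hkey, hsL, ex2, ex3]
          by_contra hcon
          push_neg at hcon
          have := pow_lt_pow_left₀ hcon hnq0 (two_ne_zero)
          linarith
        constructor
        · exact_mod_cast hz'w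
        · rw [hfin]
          push_cast
          have hexp : L + ((k:ℝ)+1) * h * (1 - 2*ε/L) = (L + (k:ℝ)*h*(1-2*ε/L)) + (h - 2*h*ε/L) := by
            ring
          rw [hexp]
          have hstep : L + (k:ℝ)*h*(1-2*ε/L) + (h - 2*h*ε/L) ≤ d + (h - 2*h*ε/L) := by linarith
          apply hstep.trans
          linarith
    obtain ⟨m1, m2⟩ := main N le_rfl
    refine ⟨euler X h w N, ?_, ?_⟩
    · rw [hNh] at m1; exact m1
    · have : L + (N:ℝ)*h*(1 - 2*ε/L) = L + T - 2*T*ε/L := by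
        rw [hNh]; field_simp; ring
      rw [this] at m2; exact m2
  -- maximum of infDist on the closed ball
  obtain ⟨z₀, hz₀mem, hz₀max⟩ := (isCompact_closedBall w T).exists_isMaxOn
    ⟨w, mem_closedBall_self hT⟩ ((continuous_infDist_pt X).continuousOn)
  have hz₀w : dist z₀ w ≤ T := mem_closedBall.mp hz₀mem
  have h1 : L + T ≤ infDist z₀ X := by
    apply le_of_forall_sub_le
    intro η hη
    set ε : ℝ := min (L/4) (η*L/(2*T+2)) with hεdef
    have hε0 : 0 < ε := lt_min (by linarith) (by positivity)
    have hε4 : ε ≤ L/4 := min_le_left _ _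
    obtain ⟨z, hz1, hz2⟩ := claimB ε hε0 hε4
    have hzmax : infDist z X ≤ infDist z₀ X :=
      isMaxOn_iff.mp hz₀max z (mem_closedBall.mpr hz1)
    have hkey : 2*T*ε/L ≤ η := by
      have hεle : ε ≤ η*L/(2*T+2) := min_le_right _ _
      rw [div_le_iff₀ hL]
      have c1 : 2*T*ε ≤ 2*T*(η*L/(2*T+2)) :=
        mul_le_mul_of_nonneg_left hεle (by linarith)
      have c2 : 2*T*(η*L/(2*T+2)) = (2*T)/(2*T+2) * (η*L) := by ring
      have c3 : (2*T)/(2*T+2) ≤ 1 := by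
        rw [div_le_one (by linarith)]; linarith
      have c4 : (2*T)/(2*T+2) * (η*L) ≤ η*L :=
        mul_le_of_le_one_left (by positivity) c3
      calc 2*T*ε ≤ (2*T)/(2*T+2) * (η*L) := by rw [← c2]; exact c1
      _ ≤ η * L := c4
    linarith
  have hmX : m ∈ X := by rw [hmdef]; exact nrp_mem hX hne w
  have hwmL : dist w m = L := by rw [hmdef, hLdef]; exact dist_nrp hX hne w
  have h2 : infDist z₀ X ≤ dist z₀ m := infDist_le_dist_of_mem hmX
  have h3 : dist z₀ m ≤ dist z₀ w + dist w m := dist_triangle _ _ _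
  have eqd1 : dist z₀ m = L + T := by rw [hwmL] at h3; linarith
  have eqd2 : dist z₀ w = T := by rw [hwmL] at h3; linarith
  have eqd3 : infDist z₀ X = L + T := by rw [hwmL] at h3; linarith
  have htri : dist m w + dist w z₀ = dist m z₀ := by
    rw [dist_comm m w, hwmL, dist_comm w z₀, eqd2, dist_comm m z₀, eqd1]
  have hbtw : Wbtw ℝ m w z₀ := dist_add_dist_eq_iff.mp htri
  obtain ⟨t, ht, hwt⟩ := hbtw
  have hwt' : w - m = t • (z₀ - m) := by
    rw [AffineMap.lineMap_apply_module'] at hwt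
    rw [← hwt]
    abel
  have hnz₀m : ‖z₀ - m‖ = L + T := by rw [← dist_eq_norm]; exact eqd1
  have htval : t * (L + T) = L := by
    have hcn := congrArg norm hwt'
    rw [norm_smul, Real.norm_eq_abs, abs_of_nonneg ht.1, hnz₀m, hwm] at hcn
    linarith
  have hLT : 0 < L + T := by linarith
  have hfinal : w + T • v = z₀ := by
    have hv' : v = (L + T)⁻¹ • (z₀ - m) := by
      rw [hvdef, hwt', smul_smul]
      congr 1
      field_simp
      linarith [htval]
    have hw' : w = m + t • (z₀ - m) := by
      rw [← hwt']; abel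
    rw [hv', smul_smul, hw', add_assoc, ← add_smul]
    have hsum : t + T * (L+T)⁻¹ = 1 := by
      field_simp
      linarith [htval]
    rw [hsum, one_smul]
    abel
  rw [hfinal]
  exact eqd3

lemma reach_ineq (hX : IsClosed X) (hp : p ∈ X)
    (hdisj : Metric.ball p r ∩ closure (medialAxis X) = ∅)
    {a : E n} (ha : a ∈ ball p r) {T : ℝ} (hT : 0 < T) (hroom : dist p a + T < r) :
    ∀ q ∈ X, (inner (𝕜 := ℝ) (a - nrp X a) (q - nrp X a) : ℝ) ≤
      (infDist a X / (2 * (infDist a X + T))) * ‖q - nrp X a‖^2 := by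
  intro q hq
  have hne : X.Nonempty := ⟨p, hp⟩
  have hd0 : 0 ≤ infDist a X := infDist_nonneg
  rcases eq_or_lt_of_le hd0 with hd | hd
  · -- d = 0 : a ∈ X hence nrp X a = a
    have haX : a ∈ X := by
      rw [← hX.closure_eq]
      exact (mem_closure_iff_infDist_zero ⟨p, hp⟩).mpr hd.symm
    have hma : nrp X a = a := nrp_self hX hne (not_medial hdisj ha) haX
    rw [hma, ← hd]
    simp
  · -- d > 0
    have hray := ray_extension hX hp hdisj ha hd hT.le hroom
    set d : ℝ := infDist a X with hddef
    set m : E n := nrp X a with hmdef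
    set v : E n := d⁻¹ • (a - m) with hvdef
    have ham : a - m = d • v := by
      rw [hvdef, smul_smul, mul_inv_cancel₀ (ne_of_gt hd), one_smul]
    have hnam : ‖a - m‖ = d := by
      rw [← dist_eq_norm, hmdef, hddef]; exact dist_nrp hX hne a
    have hv1 : ‖v‖ = 1 := by
      rw [hvdef, norm_smul, hnam, norm_inv, Real.norm_eq_abs, abs_of_pos hd]
      field_simp
    set c : E n := a + T • v with hcdef
    have hcm : c - m = (d + T) • v := by
      rw [hcdef, add_smul, ← ham]; abel
    have hnormcm : ‖c - m‖ = d + T := by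
      rw [hcm, norm_smul, hv1, Real.norm_eq_abs, abs_of_pos (by linarith), mul_one]
    have hqd : d + T ≤ dist c q := by
      rw [← hray]; exact infDist_le_dist_of_mem hq
    set ip : ℝ := (inner (𝕜 := ℝ) (v) (q - m) : ℝ) with hipdef
    have hexp : ‖c - q‖^2 = (d+T)^2 - 2*((d+T)*ip) + ‖q - m‖^2 := by
      have hcq : c - q = (c - m) - (q - m) := by abel
      rw [hcq, norm_sub_sq_real, hnormcm, hcm, real_inner_smul_left, hipdef]
    have hsq2 : (d+T)^2 ≤ ‖c - q‖^2 := by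
      apply pow_le_pow_left₀ (by linarith)
      rw [← dist_eq_norm]; exact hqd
    have hip : (d+T)*ip ≤ ‖q-m‖^2/2 := by linarith
    have hLHS : (inner (𝕜 := ℝ) (a - m) (q - m) : ℝ) = d * ip := by
      rw [ham, real_inner_smul_left, hipdef]
    rw [hLHS]
    calc d * ip = (d/(d+T)) * ((d+T)*ip) := by field_simp
    _ ≤ (d/(d+T)) * (‖q-m‖^2/2) := by
        apply mul_le_mul_of_nonneg_left hip (by positivity)
    _ = d/(2*(d+T)) * ‖q-m‖^2 := by
        rw [div_mul_div_comm, div_mul_eq_mul_div, mul_comm ((d:ℝ)+T) 2]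

lemma seg_facts {x a : E n} (hxb : x ∈ ball p r) (ha : a ∈ segment ℝ x p) :
    dist p a ≤ dist p x ∧ a ∈ ball p r := by
  have hr0 : dist p x < r := by rw [dist_comm]; exact mem_ball.mp hxb
  obtain ⟨α, β, hα, hβ, hαβ, rfl⟩ := ha
  have hd : dist p (α • x + β • p) = α * dist p x := by
    rw [dist_eq_norm, dist_eq_norm]
    have hβ1 : β = 1 - α := by linarith
    have : p - (α • x + β • p) = α • (p - x) := by rw [hβ1]; module
    rw [this, norm_smul, Real.norm_eq_abs, abs_of_nonneg hα]
  have hα1 : α ≤ 1 := by linarith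
  constructor
  · rw [hd]
    calc α * dist p x ≤ 1 * dist p x := by
          apply mul_le_mul_of_nonneg_right hα1 dist_nonneg
    _ = dist p x := one_mul _
  · rw [mem_ball, dist_comm, hd]
    calc α * dist p x ≤ 1 * dist p x := by
          apply mul_le_mul_of_nonneg_right hα1 dist_nonneg
    _ = dist p x := one_mul _
    _ < r := hr0

lemma nrp_lipschitz (hX : IsClosed X) (hp : p ∈ X)
    (hdisj : Metric.ball p r ∩ closure (medialAxis X) = ∅)
    {x : E n} (hxb : x ∈ ball p r) :
    ∀ a ∈ segment ℝ x p, ∀ b ∈ segment ℝ x p,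
      dist (nrp X a) (nrp X b) ≤ ((r + dist p x)/(r - dist p x)) * dist a b := by
  intro a ha b hb
  have hne : X.Nonempty := ⟨p, hp⟩
  set L₀ : ℝ := dist p x with hL₀def
  have hL₀r : L₀ < r := by rw [hL₀def, dist_comm]; exact mem_ball.mp hxb
  have hL₀0 : 0 ≤ L₀ := dist_nonneg
  have hr0 : 0 < r := lt_of_le_of_lt hL₀0 hL₀r
  set T : ℝ := (r - L₀)/2 with hTdef
  have hT0 : 0 < T := by rw [hTdef]; linarith
  obtain ⟨hpa, hab'⟩ := seg_facts hxb ha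
  obtain ⟨hpb, hbb'⟩ := seg_facts hxb hb
  have hrooma : dist p a + T < r := by rw [hTdef]; linarith
  have hroomb : dist p b + T < r := by rw [hTdef]; linarith
  set ma : E n := nrp X a with hmadef
  set mb : E n := nrp X b with hmbdef
  set da : ℝ := infDist a X with hdadef
  set db : ℝ := infDist b X with hdbdef
  have hdaL : da ≤ L₀ := by
    rw [hdadef]
    calc infDist a X ≤ dist a p := infDist_le_dist_of_mem hp
    _ = dist p a := dist_comm a p
    _ ≤ L₀ := hpa
  have hdbL : db ≤ L₀ := by
    rw [hdbdef]
    calc infDist b X ≤ dist b p := infDist_le_dist_of_mem hp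
    _ = dist p b := dist_comm b p
    _ ≤ L₀ := hpb
  have hda0 : 0 ≤ da := infDist_nonneg
  have hdb0 : 0 ≤ db := infDist_nonneg
  set μ : ℝ := L₀/(r + L₀) with hμdef
  have hkeyA : (r - L₀)*da ≤ (r - L₀)*L₀ :=
    mul_le_mul_of_nonneg_left hdaL (by linarith)
  have hkeyB : (r - L₀)*db ≤ (r - L₀)*L₀ :=
    mul_le_mul_of_nonneg_left hdbL (by linarith)
  have hlamA : da / (2*(da + T)) ≤ μ := by
    rw [hμdef, div_le_div_iff₀ (by linarith) (by linarith), hTdef]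
    ring_nf
    ring_nf at hkeyA
    linarith [hkeyA]
  have hlamB : db / (2*(db + T)) ≤ μ := by
    rw [hμdef, div_le_div_iff₀ (by linarith) (by linarith), hTdef]
    ring_nf
    ring_nf at hkeyB
    linarith [hkeyB]
  have e1 : (inner (𝕜 := ℝ) (a - ma) (mb - ma) : ℝ) ≤ μ * ‖mb - ma‖^2 := by
    calc (inner (𝕜 := ℝ) (a - ma) (mb - ma) : ℝ)
        ≤ da / (2*(da + T)) * ‖mb - ma‖^2 :=
          reach_ineq hX hp hdisj hab' hT0 hrooma mb (nrp_mem hX hne b)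
    _ ≤ μ * ‖mb - ma‖^2 := mul_le_mul_of_nonneg_right hlamA (sq_nonneg _)
  have e2 : (inner (𝕜 := ℝ) (b - mb) (ma - mb) : ℝ) ≤ μ * ‖mb - ma‖^2 := by
    calc (inner (𝕜 := ℝ) (b - mb) (ma - mb) : ℝ)
        ≤ db / (2*(db + T)) * ‖ma - mb‖^2 :=
          reach_ineq hX hp hdisj hbb' hT0 hroomb ma (nrp_mem hX hne a)
    _ = db / (2*(db + T)) * ‖mb - ma‖^2 := by rw [norm_sub_rev]
    _ ≤ μ * ‖mb - ma‖^2 := mul_le_mul_of_nonneg_right hlamB (sq_nonneg _)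
  set ρ : ℝ := ‖mb - ma‖ with hρdef
  set nab : ℝ := ‖b - a‖ with hnabdef
  have hρ0 : 0 ≤ ρ := norm_nonneg _
  have hnab0 : 0 ≤ nab := norm_nonneg _
  have hid : ρ^2 = (inner (𝕜 := ℝ) (mb - ma) (b - a) : ℝ)
      + (inner (𝕜 := ℝ) (mb - ma) (mb - b) : ℝ)
      + (inner (𝕜 := ℝ) (mb - ma) (a - ma) : ℝ) := by
    rw [hρdef, ← real_inner_self_eq_norm_sq]
    have hdecomp : mb - ma = (b - a) + ((mb - b) + (a - ma)) := by abel
    nth_rewrite 2 [hdecomp]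
    rw [inner_add_right, inner_add_right]
    ring
  have t1 : (inner (𝕜 := ℝ) (mb - ma) (b - a) : ℝ) ≤ ρ * nab := by
    rw [hρdef, hnabdef]; exact real_inner_le_norm _ _
  have t2 : (inner (𝕜 := ℝ) (mb - ma) (mb - b) : ℝ) ≤ μ * ρ^2 := by
    have hswap : (inner (𝕜 := ℝ) (mb - ma) (mb - b) : ℝ)
        = (inner (𝕜 := ℝ) (b - mb) (ma - mb) : ℝ) := by
      rw [show ma - mb = -(mb - ma) by abel, show b - mb = -(mb - b) by abel,
        inner_neg_neg, real_inner_comm]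
    rw [hswap, hρdef]; exact e2
  have t3 : (inner (𝕜 := ℝ) (mb - ma) (a - ma) : ℝ) ≤ μ * ρ^2 := by
    rw [real_inner_comm, hρdef]; exact e1
  have key : ρ^2 ≤ ρ * nab + 2*μ*ρ^2 := by
    nth_rewrite 1 [hid]
    linarith [t1, t2, t3]
  -- conclude
  have hgoal : dist ma mb = ρ := by rw [hρdef, dist_eq_norm, norm_sub_rev]
  have hdab : dist a b = nab := by rw [hnabdef, dist_eq_norm, norm_sub_rev]
  rw [hgoal, hdab]
  have hμval : 1 - 2*μ = (r - L₀)/(r + L₀) := by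
    rw [hμdef]; field_simp; ring
  rcases eq_or_lt_of_le hρ0 with hρz | hρpos
  · rw [← hρz]
    exact mul_nonneg (div_nonneg (by linarith) (by linarith)) hnab0
  · have h1 : ρ * (ρ * ((r - L₀)/(r + L₀))) ≤ ρ * nab := by
      have : ρ * (ρ * ((r - L₀)/(r + L₀))) = ρ^2 * (1 - 2*μ) := by rw [hμval]; ring
      rw [this]
      ring_nf
      ring_nf at key
      linarith [key]
    have h2 : ρ * ((r - L₀)/(r + L₀)) ≤ nab := le_of_mul_le_mul_left h1 hρpos
    rw [div_mul_eq_mul_div, le_div_iff₀ (by linarith)]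
    calc ρ * (r - L₀) = (ρ * ((r - L₀)/(r + L₀))) * (r + L₀) := by field_simp
    _ ≤ nab * (r + L₀) := by
        apply mul_le_mul_of_nonneg_right h2 (by linarith)
    _ = (r + L₀) * nab := by ring

lemma eVariationOn_le_of_lip {f : ℝ → E n} {C : ℝ} (hC : 0 ≤ C) {a b : ℝ} (hab : a ≤ b)
    (hf : ∀ s ∈ Icc a b, ∀ t ∈ Icc a b, dist (f s) (f t) ≤ C * dist s t) :
    eVariationOn f (Icc a b) ≤ ENNReal.ofReal (C * (b - a)) := by
  apply iSup_le
  rintro ⟨m, u, hu, us⟩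
  calc ∑ i ∈ Finset.range m, edist (f (u (i + 1))) (f (u i))
      ≤ ∑ i ∈ Finset.range m, ENNReal.ofReal (C * (u (i+1) - u i)) := by
        apply Finset.sum_le_sum
        intro i _
        rw [edist_dist]
        apply ENNReal.ofReal_le_ofReal
        calc dist (f (u (i+1))) (f (u i)) ≤ C * dist (u (i+1)) (u i) :=
              hf _ (us _) _ (us _)
        _ = C * (u (i+1) - u i) := by
              rw [Real.dist_eq, abs_of_nonneg (sub_nonneg.mpr (hu (Nat.le_succ i)))]
  _ = ENNReal.ofReal (∑ i ∈ Finset.range m, C * (u (i+1) - u i)) := by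
        rw [ENNReal.ofReal_sum_of_nonneg]
        intro i _
        exact mul_nonneg hC (sub_nonneg.mpr (hu (Nat.le_succ i)))
  _ = ENNReal.ofReal (C * (u m - u 0)) := by rw [← Finset.mul_sum, Finset.sum_range_sub]
  _ ≤ ENNReal.ofReal (C * (b - a)) := by
        apply ENNReal.ofReal_le_ofReal
        apply mul_le_mul_of_nonneg_left _ hC
        have h1 := (us m).1
        have h2 := (us m).2
        have h3 := (us 0).1
        have h4 := (us 0).2
        linarith

lemma glue_dist_bound {f : ℝ → E n} {C : ℝ} (hC : 0 ≤ C)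
    (h1 : ∀ s ∈ Icc (0:ℝ) 2⁻¹, ∀ t ∈ Icc (0:ℝ) 2⁻¹, dist (f s) (f t) ≤ C * dist s t)
    (h2 : ∀ s ∈ Icc (2⁻¹:ℝ) 1, ∀ t ∈ Icc (2⁻¹:ℝ) 1, dist (f s) (f t) ≤ C * dist s t) :
    ∀ s ∈ Icc (0:ℝ) 1, ∀ t ∈ Icc (0:ℝ) 1, dist (f s) (f t) ≤ C * dist s t := by
  have key : ∀ s ∈ Icc (0:ℝ) 1, ∀ t ∈ Icc (0:ℝ) 1, s ≤ t →
      dist (f s) (f t) ≤ C * dist s t := by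
    intro s hs t ht hst
    rcases le_or_gt t 2⁻¹ with h | h
    · exact h1 s ⟨hs.1, hst.trans h⟩ t ⟨(hs.1).trans hst, h⟩
    rcases le_or_gt 2⁻¹ s with h' | h'
    · exact h2 s ⟨h', hst.trans ht.2⟩ t ⟨h'.trans hst, ht.2⟩
    · have hs2 : s ∈ Icc (0:ℝ) 2⁻¹ := ⟨hs.1, h'.le⟩
      have ht2 : t ∈ Icc (2⁻¹:ℝ) 1 := ⟨h.le, ht.2⟩
      have hm1 : (2⁻¹:ℝ) ∈ Icc (0:ℝ) 2⁻¹ := by norm_num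
      have hm2 : (2⁻¹:ℝ) ∈ Icc (2⁻¹:ℝ) 1 := by norm_num
      calc dist (f s) (f t) ≤ dist (f s) (f 2⁻¹) + dist (f 2⁻¹) (f t) := dist_triangle _ _ _
      _ ≤ C * dist s 2⁻¹ + C * dist (2⁻¹:ℝ) t := by
          have := h1 s hs2 2⁻¹ hm1
          have := h2 2⁻¹ hm2 t ht2
          linarith
      _ = C * (dist s 2⁻¹ + dist (2⁻¹:ℝ) t) := by ring
      _ = C * dist s t := by
          rw [Real.dist_eq, Real.dist_eq, Real.dist_eq,
            abs_of_nonpos (by linarith), abs_of_nonpos (by linarith),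
            abs_of_nonpos (by linarith)]
          ring
  intro s hs t ht
  rcases le_total s t with hst | hst
  · exact key s hs t ht hst
  · rw [dist_comm (f s) (f t), dist_comm s t]
    exact key t ht s hs hst

theorem main_thm (hX : IsClosed X) (hp : p ∈ X) (hr : 0 < r)
    (hdisj : Metric.ball p r ∩ closure (medialAxis X) = ∅) :
    ∀ x ∈ Metric.ball p r ∩ X, ∀ y ∈ Metric.ball p r ∩ X,
      ∃ γ : ℝ → E n, IsPathIn X x y γ ∧ eVariationOn γ (Set.Icc 0 1) < ⊤ := by
  intro x hx y hy
  obtain ⟨hxb, hxX⟩ := hx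
  obtain ⟨hyb, hyX⟩ := hy
  have hne : X.Nonempty := ⟨p, hp⟩
  set c : ℝ → E n :=
    fun t => if t ≤ 2⁻¹ then x + (2*t) • (p - x) else y + (2 - 2*t) • (p - y) with hcdef
  set γ : ℝ → E n := fun t => nrp X (c t) with hγdef
  have hc1 : ∀ t ∈ Icc (0:ℝ) 2⁻¹, c t = x + (2*t) • (p - x) := by
    intro t ht
    rw [hcdef]
    simp only [if_pos ht.2]
  have hc2 : ∀ t ∈ Icc (2⁻¹:ℝ) 1, c t = y + (2 - 2*t) • (p - y) := by
    intro t ht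
    rcases lt_or_eq_of_le ht.1 with h | h
    · rw [hcdef]
      simp only [if_neg (not_le.mpr h)]
    · rw [hcdef, ← h]
      simp only [le_refl, if_pos]
      norm_num
  have hmem1 : ∀ t ∈ Icc (0:ℝ) 2⁻¹, c t ∈ segment ℝ x p := by
    intro t ht
    rw [hc1 t ht]
    refine ⟨1 - 2*t, 2*t, by linarith [ht.2], by linarith [ht.1], by ring, by module⟩
  have hmem2 : ∀ t ∈ Icc (2⁻¹:ℝ) 1, c t ∈ segment ℝ y p := by
    intro t ht
    rw [hc2 t ht]
    refine ⟨2*t - 1, 2 - 2*t, by linarith [ht.1], by linarith [ht.2], by ring, by module⟩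
  set Cx : ℝ := ((r + dist p x)/(r - dist p x)) * (2 * ‖p - x‖) with hCxdef
  set Cy : ℝ := ((r + dist p y)/(r - dist p y)) * (2 * ‖p - y‖) with hCydef
  have hdx : dist p x < r := by rw [dist_comm]; exact mem_ball.mp hxb
  have hdy : dist p y < r := by rw [dist_comm]; exact mem_ball.mp hyb
  have hCx0 : 0 ≤ Cx := by
    rw [hCxdef]
    apply mul_nonneg (div_nonneg (by positivity) (by linarith)) (by positivity)
  have hCy0 : 0 ≤ Cy := by
    rw [hCydef]
    apply mul_nonneg (div_nonneg (by positivity) (by linarith)) (by positivity)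
  set C : ℝ := max Cx Cy with hCdef
  have hC0 : 0 ≤ C := le_trans hCx0 (le_max_left _ _)
  have hlip1 : ∀ s ∈ Icc (0:ℝ) 2⁻¹, ∀ t ∈ Icc (0:ℝ) 2⁻¹,
      dist (γ s) (γ t) ≤ Cx * dist s t := by
    intro s hs t ht
    have hL := nrp_lipschitz hX hp hdisj hxb (c s) (hmem1 s hs) (c t) (hmem1 t ht)
    have hdistc : dist (c s) (c t) = (2 * ‖p - x‖) * dist s t := by
      rw [hc1 s hs, hc1 t ht, dist_eq_norm]
      have hsub : (x + (2*s)•(p-x)) - (x + (2*t)•(p-x)) = (2*(s - t))•(p - x) := by module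
      rw [hsub, norm_smul, Real.norm_eq_abs, Real.dist_eq, abs_mul]
      rw [abs_of_pos (by norm_num : (0:ℝ) < 2)]
      ring
    calc dist (γ s) (γ t) ≤ ((r + dist p x)/(r - dist p x)) * dist (c s) (c t) := hL
    _ = Cx * dist s t := by rw [hdistc, hCxdef]; ring
  have hlip2 : ∀ s ∈ Icc (2⁻¹:ℝ) 1, ∀ t ∈ Icc (2⁻¹:ℝ) 1,
      dist (γ s) (γ t) ≤ Cy * dist s t := by
    intro s hs t ht
    have hL := nrp_lipschitz hX hp hdisj hyb (c s) (hmem2 s hs) (c t) (hmem2 t ht)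
    have hdistc : dist (c s) (c t) = (2 * ‖p - y‖) * dist s t := by
      rw [hc2 s hs, hc2 t ht, dist_eq_norm]
      have hsub : (y + (2 - 2*s)•(p-y)) - (y + (2 - 2*t)•(p-y)) = (2*(t - s))•(p - y) := by
        module
      rw [hsub, norm_smul, Real.norm_eq_abs, Real.dist_eq, abs_mul]
      rw [abs_of_pos (by norm_num : (0:ℝ) < 2), abs_sub_comm]
      ring
    calc dist (γ s) (γ t) ≤ ((r + dist p y)/(r - dist p y)) * dist (c s) (c t) := hL
    _ = Cy * dist s t := by rw [hdistc, hCydef]; ring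
  have hlip1' : ∀ s ∈ Icc (0:ℝ) 2⁻¹, ∀ t ∈ Icc (0:ℝ) 2⁻¹,
      dist (γ s) (γ t) ≤ C * dist s t := fun s hs t ht =>
    (hlip1 s hs t ht).trans (mul_le_mul_of_nonneg_right (le_max_left _ _) dist_nonneg)
  have hlip2' : ∀ s ∈ Icc (2⁻¹:ℝ) 1, ∀ t ∈ Icc (2⁻¹:ℝ) 1,
      dist (γ s) (γ t) ≤ C * dist s t := fun s hs t ht =>
    (hlip2 s hs t ht).trans (mul_le_mul_of_nonneg_right (le_max_right _ _) dist_nonneg)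
  have hglue := glue_dist_bound hC0 hlip1' hlip2'
  have hcont : ContinuousOn γ (Icc (0:ℝ) 1) := by
    apply LipschitzOnWith.continuousOn (K := C.toNNReal)
    apply LipschitzOnWith.of_dist_le_mul
    intro s hs t ht
    rw [Real.coe_toNNReal C hC0]
    exact hglue s hs t ht
  have hγ0 : γ 0 = x := by
    have hc0 : c 0 = x := by
      rw [hc1 0 ⟨le_rfl, by norm_num⟩]
      simp
    rw [hγdef]
    simp only [hc0]
    exact nrp_self hX hne (not_medial hdisj hxb) hxX
  have hγ1 : γ 1 = y := by
    have hc1' : c 1 = y := by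
      rw [hc2 1 ⟨by norm_num, le_rfl⟩]
      norm_num
    rw [hγdef]
    simp only [hc1']
    exact nrp_self hX hne (not_medial hdisj hyb) hyX
  have hmemX : ∀ t ∈ Icc (0:ℝ) 1, γ t ∈ X := fun t _ => nrp_mem hX hne (c t)
  -- variation bound
  have hvar : eVariationOn γ (Icc (0:ℝ) 1) < ⊤ := by
    have hsplit := eVariationOn.Icc_add_Icc γ (s := Icc (0:ℝ) 1)
      (by norm_num : (0:ℝ) ≤ 2⁻¹) (by norm_num : (2⁻¹:ℝ) ≤ 1)
      (by constructor <;> norm_num)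
    rw [inter_eq_self_of_subset_right (Icc_subset_Icc le_rfl (by norm_num)),
      inter_eq_self_of_subset_right (Icc_subset_Icc (by norm_num) le_rfl),
      inter_self] at hsplit
    rw [← hsplit]
    have b1 : eVariationOn γ (Icc (0:ℝ) 2⁻¹) ≤ ENNReal.ofReal (Cx * (2⁻¹ - 0)) :=
      eVariationOn_le_of_lip hCx0 (by norm_num) hlip1
    have b2 : eVariationOn γ (Icc (2⁻¹:ℝ) 1) ≤ ENNReal.ofReal (Cy * (1 - 2⁻¹)) :=
      eVariationOn_le_of_lip hCy0 (by norm_num) hlip2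
    calc eVariationOn γ (Icc (0:ℝ) 2⁻¹) + eVariationOn γ (Icc (2⁻¹:ℝ) 1)
        ≤ ENNReal.ofReal (Cx * (2⁻¹ - 0)) + ENNReal.ofReal (Cy * (1 - 2⁻¹)) :=
          add_le_add b1 b2
    _ < ⊤ := by
        apply ENNReal.add_lt_top.mpr
        exact ⟨ENNReal.ofReal_lt_top, ENNReal.ofReal_lt_top⟩
  exact ⟨γ, ⟨hcont, hγ0, hγ1, hmemX⟩, hvar⟩

end Stmt10

theorem stmt_10 {n : ℕ} (X : Set (E n)) (hX : IsClosed X)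
    (p : E n) (hp : p ∈ X) (r : ℝ) (hr : 0 < r)
    (hdisj : Metric.ball p r ∩ closure (medialAxis X) = ∅) :
    ∀ x ∈ Metric.ball p r ∩ X, ∀ y ∈ Metric.ball p r ∩ X,
      ∃ γ : ℝ → E n, IsPathIn X x y γ ∧ pathLength γ < ⊤ := by
  intro x hx y hy
  obtain ⟨γ, hpath, hlen⟩ := Stmt10.main_thm hX hp hr hdisj x hx y hy
  exact ⟨γ, hpath, hlen⟩
end
end

section
/- For the cone X = {(x,y,z) ∈ ℝ³ : z = √(x² + y²)}, the origin belongs to the closure of the medial axis of X; in fact the positive z-axis {(0,0,t) : t > 0} is contained in M_X. -/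
open Metric Set Filter

noncomputable section

/-- The point `(x, y, z)` of `ℝ³` as a Euclidean space element. -/
def pt (x y z : ℝ) : E 3 := (WithLp.equiv 2 (Fin 3 → ℝ)).symm ![x, y, z]

def cone : Set (E 3) := {v | ∃ x y : ℝ, v = pt x y (Real.sqrt (x ^ 2 + y ^ 2))}

lemma dist_pt (a b c d e f : ℝ) :
    dist (pt a b c) (pt d e f) = Real.sqrt ((a-d)^2+(b-e)^2+(c-f)^2) := by
  simp [pt, EuclideanSpace.dist_eq, Fin.sum_univ_three, Real.dist_eq, sq_abs]

lemma p_mem (s : ℝ) (hs : 0 ≤ s) : pt s 0 s ∈ cone := by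
  refine ⟨s, 0, ?_⟩
  rw [show s ^ 2 + 0 ^ 2 = s ^ 2 by ring, Real.sqrt_sq hs]

lemma q_mem (s : ℝ) (hs : 0 ≤ s) : pt (-s) 0 s ∈ cone := by
  refine ⟨-s, 0, ?_⟩
  rw [show (-s) ^ 2 + 0 ^ 2 = s ^ 2 by ring, Real.sqrt_sq hs]

lemma hd1 (t : ℝ) : dist (pt 0 0 t) (pt (t/2) 0 (t/2)) = Real.sqrt (t ^ 2 / 2) := by
  rw [dist_pt]; congr 1; ring

lemma hd2 (t : ℝ) : dist (pt 0 0 t) (pt (-(t/2)) 0 (t/2)) = Real.sqrt (t ^ 2 / 2) := by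
  rw [dist_pt]; congr 1; ring

lemma infDist_eq (t : ℝ) (ht : 0 < t) :
    Metric.infDist (pt 0 0 t) cone = Real.sqrt (t ^ 2 / 2) := by
  apply le_antisymm
  · rw [← hd1 t]
    exact Metric.infDist_le_dist_of_mem (p_mem (t/2) (by linarith))
  · by_contra hc
    rw [not_le, Metric.infDist_lt_iff ⟨_, p_mem 0 le_rfl⟩] at hc
    obtain ⟨z, ⟨x, y, rfl⟩, hlt⟩ := hc
    rw [dist_pt] at hlt
    have hle : Real.sqrt (t ^ 2 / 2) ≤
        Real.sqrt ((0-x)^2+(0-y)^2+(t-Real.sqrt (x ^ 2 + y ^ 2))^2) := by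
      apply Real.sqrt_le_sqrt
      have hr := Real.sq_sqrt (by positivity : (0:ℝ) ≤ x ^ 2 + y ^ 2)
      nlinarith [sq_nonneg (2 * Real.sqrt (x ^ 2 + y ^ 2) - t)]
    linarith

theorem stmt_12 :
    (∀ t : ℝ, 0 < t → pt 0 0 t ∈ medialAxis cone) ∧
    pt 0 0 0 ∈ closure (medialAxis cone) := by
  have key : ∀ t : ℝ, 0 < t → pt 0 0 t ∈ medialAxis cone := by
    intro t ht
    refine ⟨pt (t/2) 0 (t/2), ⟨p_mem _ (by linarith), by rw [hd1, infDist_eq t ht]⟩,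
      pt (-(t/2)) 0 (t/2), ⟨q_mem _ (by linarith), by rw [hd2, infDist_eq t ht]⟩, ?_⟩
    intro h
    have := congrArg (fun v : E 3 => v 0) h
    simp [pt] at this
    linarith
  refine ⟨key, ?_⟩
  rw [Metric.mem_closure_iff]
  intro ε hε
  refine ⟨pt 0 0 (ε/2), key _ (by linarith), ?_⟩
  rw [dist_pt]
  rw [show (0-0:ℝ)^2+(0-0)^2+(0-ε/2)^2 = (ε/2)^2 by ring, Real.sqrt_sq (by linarith)]
  linarith
end
end

section
/- Let X ⊆ ℝⁿ be closed and nonempty and let p, q ∈ ℝⁿ with p ∉ M_X, d(p, M_X) > δ > 0, ‖p − q‖ = ε < δ, and ⟨p − q, p − m(p)⟩ = 0. Then every closest point of q lies in B(q, √(r² + ε²)) \ B(p_δ, δ + r), where r = ‖p − m(p)‖ and p_δ = p + δ(p − m(p))/r (for p ∉ X). -/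
open Metric Set Filter

noncomputable section

open Topology

/-!
The first inclusion is Pythagoras: `q - p ⟂ p - x`, so `x` itself lies at distance
`√(r² + ε²)` from `q`.

For the second it suffices that `d(p_t, X) ≥ r + t` along the ray `p_t = p + t (p - x) / r`
for `t < δ`. Off the medial axis the closest-point map `m` is continuous, hence uniformly
continuous on the compact ball `closedBall p t`. The Euler polygon of `c ↦ (c - m c) / d(c, X)`
started at `p` with steps of length `s` then gains almost `s` in distance to `X` at every step.
Its endpoint lies within `t` of `p` and at distance almost `r + t` from `X`, so, since `x ∈ X`,
it is close to `p_t`; letting the error tend to zero gives `d(p_t, X) ≥ r + t`.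
-/

lemma dist_ray_sq_le {F : Type*} [NormedAddCommGroup F] [InnerProductSpace ℝ F]
    {p x c : F} {t e : ℝ} (hr : 0 < dist p x) (hc : dist c p ≤ t)
    (het : e ≤ dist p x + t) (hfar : dist p x + t - e ≤ dist c x) :
    dist (p + (t / dist p x) • (p - x)) c ^ 2 ≤ 2 * t * (dist p x + t) * e / dist p x := by
  simp only [dist_eq_norm] at *
  set r := ‖p - x‖
  set I := inner ℝ (c - p) (p - x)
  have ht : 0 ≤ t := (norm_nonneg _).trans hc
  have hcx : ‖c - x‖ ^ 2 = ‖c - p‖ ^ 2 + 2 * I + r ^ 2 := by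
    rw [← norm_add_sq_real, sub_add_sub_cancel]
  have hray :
      ‖p + (t / r) • (p - x) - c‖ ^ 2 = t ^ 2 - 2 * (t / r) * I + ‖c - p‖ ^ 2 := by
    rw [show p + (t / r) • (p - x) - c = (t / r) • (p - x) - (c - p) by abel, norm_sub_sq_real,
      norm_smul, real_inner_smul_left, real_inner_comm, Real.norm_of_nonneg (by positivity),
      div_mul_cancel₀ _ hr.ne']
    ring
  have hI : 2 * (t / r) * I * r = 2 * t * I := by field_simp
  have hfar_sq : (r + t - e) ^ 2 ≤ ‖c - x‖ ^ 2 := pow_le_pow_left₀ (by linarith) hfar 2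
  have hc_sq : ‖c - p‖ ^ 2 ≤ t ^ 2 := pow_le_pow_left₀ (norm_nonneg _) hc 2
  rw [hcx] at hfar_sq
  rw [hray, le_div_iff₀ hr]
  nlinarith [mul_le_mul_of_nonneg_left hfar_sq ht,
    mul_le_mul_of_nonneg_left hc_sq (add_nonneg ht hr.le), mul_nonneg ht (sq_nonneg e)]

variable {n : ℕ} {X : Set (E n)}

/-- A closest point of `X` to `c`; a junk value when `mSet X c` is empty. -/
def nearest (X : Set (E n)) (c : E n) : E n :=
  Classical.epsilon (· ∈ mSet X c)

lemma mSet_nonempty (hX : IsClosed X) (hne : X.Nonempty) (c : E n) : (mSet X c).Nonempty := by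
  obtain ⟨y, hy, hyd⟩ := hX.exists_infDist_eq_dist hne c
  exact ⟨y, hy, hyd.symm⟩

lemma nearest_mem_mSet (hX : IsClosed X) (hne : X.Nonempty) (c : E n) : nearest X c ∈ mSet X c :=
  Classical.epsilon_spec (mSet_nonempty hX hne c)

lemma mSet_subsingleton {c : E n} (hc : c ∉ medialAxis X) : (mSet X c).Subsingleton :=
  fun y hy z hz => by_contra fun h => hc ⟨y, hy, z, hz, h⟩

lemma exists_pos_dist_lt_of_dist_lt_infDist_add (hX : IsClosed X) {c z : E n}
    (hc : c ∉ medialAxis X) (hz : z ∈ mSet X c) {ε : ℝ} (hε : 0 < ε) :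
    ∃ g > 0, ∀ y ∈ X, dist c y < infDist c X + g → dist y z < ε := by
  rcases (X \ ball z ε).eq_empty_or_nonempty with hempty | hfar
  · exact ⟨1, one_pos, fun y hy _ => by_contra fun h => hempty.subset ⟨hy, h⟩⟩
  obtain ⟨w, ⟨hwX, hwz⟩, hw⟩ := (hX.sdiff isOpen_ball).exists_infDist_eq_dist hfar c
  refine ⟨infDist c (X \ ball z ε) - infDist c X, ?_, fun y hy hyc => by_contra fun h => ?_⟩
  · rw [gt_iff_lt, sub_pos, hw]
    refine (infDist_le_dist_of_mem hwX).lt_of_ne fun h => hwz ?_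
    rw [mem_ball, mSet_subsingleton hc ⟨hwX, h.symm⟩ hz, dist_self]
    exact hε
  · have := infDist_le_dist_of_mem (x := c) (show y ∈ X \ ball z ε from ⟨hy, h⟩)
    linarith

lemma continuousAt_nearest (hX : IsClosed X) (hne : X.Nonempty) {c : E n}
    (hc : c ∉ medialAxis X) : ContinuousAt (nearest X) c := by
  rw [Metric.continuousAt_iff]
  intro ε hε
  obtain ⟨g, hg, hgap⟩ :=
    exists_pos_dist_lt_of_dist_lt_infDist_add hX hc (nearest_mem_mSet hX hne c) hε
  refine ⟨g / 2, half_pos hg, fun c' hc' => hgap _ (nearest_mem_mSet hX hne c').1 ?_⟩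
  have htri : dist c (nearest X c') ≤ dist c c' + dist c' (nearest X c') := dist_triangle _ _ _
  have hlip : infDist c' X ≤ infDist c X + dist c' c := infDist_le_infDist_add_dist
  rw [(nearest_mem_mSet hX hne c').2] at htri
  linarith [dist_comm c c']

lemma continuousOn_nearest (hX : IsClosed X) (hne : X.Nonempty) {U : Set (E n)}
    (hU : U ∩ medialAxis X = ∅) : ContinuousOn (nearest X) U :=
  fun _ hc => (continuousAt_nearest hX hne fun hM =>
    eq_empty_iff_forall_notMem.1 hU _ ⟨hc, hM⟩).continuousWithinAt

/-- A step of length `s` of the Euler scheme for the gradient flow of `d(·, X)`,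
whose gradient is `(c - m c) / d(c, X)` off the medial axis. -/
def eulerStep (X : Set (E n)) (s : ℝ) (c : E n) : E n :=
  c + (s / infDist c X) • (c - nearest X c)

lemma dist_eulerStep (hX : IsClosed X) (hne : X.Nonempty) {c : E n} {s : ℝ} (hs : 0 ≤ s)
    (hc : 0 < infDist c X) : dist c (eulerStep X s c) = s := by
  rw [eulerStep, dist_self_add_right, norm_smul, ← dist_eq_norm, (nearest_mem_mSet hX hne c).2,
    Real.norm_of_nonneg (by positivity), div_mul_cancel₀ _ hc.ne']

lemma le_infDist_eulerStep (hX : IsClosed X) (hne : X.Nonempty) {c : E n} {s ε : ℝ}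
    (hs : 0 ≤ s) (hc : 0 < infDist c X) (hε : ε ≤ 2 * infDist c X)
    (hnear : dist (nearest X c) (nearest X (eulerStep X s c)) ≤ ε) :
    infDist c X + s - s * ε / infDist c X ≤ infDist (eulerStep X s c) X := by
  set h := infDist c X
  set z := nearest X c
  set z' := nearest X (eulerStep X s c)
  have hz : ‖c - z‖ = h := by rw [← dist_eq_norm]; exact (nearest_mem_mSet hX hne c).2
  have hz' : h ≤ ‖c - z'‖ := by
    rw [← dist_eq_norm]; exact infDist_le_dist_of_mem (nearest_mem_mSet hX hne _).1
  have hH : ‖eulerStep X s c - z'‖ = infDist (eulerStep X s c) X := by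
    rw [← dist_eq_norm]; exact (nearest_mem_mSet hX hne _).2
  -- `z'` is within `ε` of `z`, so `c - z'` still points almost along `c - z`
  have hinner : h ^ 2 - h * ε ≤ inner ℝ (c - z') (c - z) := by
    have hcs := real_inner_le_norm (z' - z) (c - z)
    rw [← dist_eq_norm, dist_comm, hz] at hcs
    rw [show c - z' = (c - z) - (z' - z) by abel, inner_sub_left, real_inner_self_eq_norm_sq, hz]
    nlinarith [hc.le]
  have hexpand : ‖eulerStep X s c - z'‖ ^ 2 =
      ‖c - z'‖ ^ 2 + 2 * (s / h) * inner ℝ (c - z') (c - z) + s ^ 2 := by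
    rw [eulerStep, show c + (s / h) • (c - z) - z' = (c - z') + (s / h) • (c - z) by abel,
      norm_add_sq_real, real_inner_smul_right, norm_smul, hz, Real.norm_of_nonneg (by positivity),
      div_mul_cancel₀ _ hc.ne']
    ring
  have hgain : h ^ 2 + 2 * s * (h - ε) + s ^ 2 ≤ infDist (eulerStep X s c) X ^ 2 := by
    have : s * (h - ε) ≤ (s / h) * inner ℝ (c - z') (c - z) := by
      rw [div_mul_eq_mul_div, le_div_iff₀ hc]
      nlinarith
    rw [← hH, hexpand]
    nlinarith [pow_le_pow_left₀ hc.le hz' 2]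
  have hε0 : 0 ≤ ε := dist_nonneg.trans hnear
  have hk : s * ε / h * h = s * ε := div_mul_cancel₀ _ hc.ne'
  have hk0 : 0 ≤ s * ε / h := by positivity
  have hks : s * ε / h ≤ 2 * s := by rw [div_le_iff₀ hc]; nlinarith
  nlinarith [infDist_nonneg (x := eulerStep X s c) (s := X)]

lemma eulerStep_iterate_bounds (hX : IsClosed X) (hne : X.Nonempty) {p : E n} {s ε : ℝ} {m : ℕ}
    (hs : 0 ≤ s) (hε : 0 ≤ ε) (hp : 0 < infDist p X) (hεp : ε ≤ infDist p X)
    (hmod : ∀ a ∈ closedBall p (m * s), ∀ b ∈ closedBall p (m * s),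
      dist a b ≤ s → dist (nearest X a) (nearest X b) ≤ ε) :
    ∀ k ≤ m, dist p ((eulerStep X s)^[k] p) ≤ k * s ∧
      infDist p X + k * (s - s * ε / infDist p X) ≤ infDist ((eulerStep X s)^[k] p) X := by
  set r := infDist p X
  have hloss : s * ε / r ≤ s := by rw [div_le_iff₀ hp]; exact mul_le_mul_of_nonneg_left hεp hs
  intro k
  induction k with
  | zero => simpa using le_rfl
  | succ k ih =>
    intro hk
    obtain ⟨hdist, hfar⟩ := ih (by omega)
    set c := (eulerStep X s)^[k] p
    have hk' : (k : ℝ) + 1 ≤ m := by exact_mod_cast hk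
    have hcr : r ≤ infDist c X :=
      le_trans (by nlinarith [(Nat.cast_nonneg k : (0 : ℝ) ≤ k)]) hfar
    have hstep := dist_eulerStep hX hne hs (hp.trans_le hcr)
    have hnext : dist p (eulerStep X s c) ≤ (k + 1) * s := by
      linarith [dist_triangle p c (eulerStep X s c)]
    have hnear := hmod c (mem_closedBall'.2 (by nlinarith)) _
      (mem_closedBall'.2 (hnext.trans (by nlinarith))) hstep.le
    have hgain := le_infDist_eulerStep hX hne hs (hp.trans_le hcr) (by linarith) hnear
    have hloss' : s * ε / infDist c X ≤ s * ε / r :=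
      div_le_div_of_nonneg_left (by positivity) hp hcr
    rw [Function.iterate_succ_apply']
    push_cast
    exact ⟨hnext, by linarith⟩

/-- The endpoint of an Euler polygon of total length `t`. -/
lemma exists_dist_le_and_le_infDist (hX : IsClosed X) (hne : X.Nonempty) {p : E n} {t ε : ℝ}
    (ht : 0 < t) (hε : 0 < ε) (hεp : ε ≤ infDist p X)
    (hcont : ContinuousOn (nearest X) (closedBall p t)) :
    ∃ c, dist p c ≤ t ∧ infDist p X + t - t * ε / infDist p X ≤ infDist c X := by
  obtain ⟨s₀, hs₀, hmod⟩ := Metric.uniformContinuousOn_iff.1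
    ((isCompact_closedBall p t).uniformContinuousOn_of_continuous hcont) ε hε
  set m := ⌊t / s₀⌋₊ + 1
  have hm : (0 : ℝ) < m := by positivity
  set s := t / m
  have hms : m * s = t := mul_div_cancel₀ _ hm.ne'
  have hs : s < s₀ := by
    have := Nat.lt_floor_add_one (t / s₀)
    rw [div_lt_iff₀ hs₀] at this
    rw [div_lt_iff₀ hm]
    push_cast [m]
    linarith
  obtain ⟨hdist, hfar⟩ := eulerStep_iterate_bounds hX hne (m := m) (by positivity) hε.le
    (hε.trans_le hεp) hεp (fun a ha b hb hab =>
      (hmod a (hms ▸ ha) b (hms ▸ hb) (hab.trans_lt hs)).le) m le_rfl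
  refine ⟨_, hms ▸ hdist, le_trans (le_of_eq ?_) hfar⟩
  rw [← hms]
  ring

lemma add_le_infDist_ray_of_lt (hX : IsClosed X) {p x : E n} {δ t : ℝ} (hxX : x ∈ X)
    (hxp : dist p x = infDist p X) (hr : 0 < dist p x) (hball : ball p δ ∩ medialAxis X = ∅)
    (ht : 0 < t) (htδ : t < δ) :
    dist p x + t ≤ infDist (p + (t / dist p x) • (p - x)) X := by
  -- the lower bound on `d(p_t, X)` that an Euler polygon with modulus `ε` yields
  set f : ℝ → ℝ := fun ε => dist p x + t - t * ε / dist p x -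
    √(2 * t * (dist p x + t) * (t * ε / dist p x) / dist p x)
  have hf : Tendsto f (𝓝[>] 0) (𝓝 (dist p x + t)) :=
    tendsto_nhdsWithin_of_tendsto_nhds ((by fun_prop : Continuous f).tendsto' 0 _ (by simp [f]))
  refine le_of_tendsto hf (eventually_of_mem (Ioc_mem_nhdsGT hr) fun ε ⟨hε, hεr⟩ => ?_)
  obtain ⟨c, hpc, hc⟩ := exists_dist_le_and_le_infDist hX ⟨x, hxX⟩ ht hε (hxp ▸ hεr)
    ((continuousOn_nearest hX ⟨x, hxX⟩ hball).mono (closedBall_subset_ball htδ))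
  rw [← hxp] at hc
  have he : t * ε / dist p x ≤ t := by
    rw [div_le_iff₀ hr]; exact mul_le_mul_of_nonneg_left hεr ht.le
  have hsq := dist_ray_sq_le (c := c) (t := t) (e := t * ε / dist p x) hr (by rwa [dist_comm])
    (by linarith) (by linarith [infDist_le_dist_of_mem (x := c) hxX])
  have hcpt := (le_abs_self _).trans (Real.abs_le_sqrt hsq)
  have hlip : infDist c X ≤ infDist (p + (t / dist p x) • (p - x)) X +
      dist c (p + (t / dist p x) • (p - x)) := infDist_le_infDist_add_dist
  rw [dist_comm c] at hlip
  simp only [f]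
  linarith

lemma add_le_infDist_ray (hX : IsClosed X) {p x : E n} {δ : ℝ} (hxX : x ∈ X)
    (hxp : dist p x = infDist p X) (hr : 0 < dist p x) (hδ : 0 < δ)
    (hball : ball p δ ∩ medialAxis X = ∅) :
    dist p x + δ ≤ infDist (p + (δ / dist p x) • (p - x)) X := by
  set S := {t : ℝ | dist p x + t ≤ infDist (p + (t / dist p x) • (p - x)) X}
  have hclosed : IsClosed S :=
    isClosed_le (by fun_prop) ((continuous_infDist_pt X).comp (by fun_prop))
  have hIoo : Ioo 0 δ ⊆ S :=
    fun t ⟨ht, htδ⟩ => add_le_infDist_ray_of_lt hX hxX hxp hr hball ht htδ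
  exact hclosed.closure_subset_iff.2 hIoo (closure_Ioo hδ.ne ▸ right_mem_Icc.2 hδ.le)

theorem stmt_19_general {n : ℕ} (X : Set (E n)) (hX : IsClosed X)
    (p q : E n) (hpX : p ∉ X)
    (x : E n) (hx : mSet X p = {x})
    (δ ε : ℝ) (hδ : 0 < δ) (hball : Metric.ball p δ ∩ medialAxis X = ∅)
    (hε : dist p q = ε)
    (horth : (inner ℝ (p - q) (p - x) : ℝ) = 0) :
    mSet X q ⊆
      Metric.closedBall q (Real.sqrt (dist p x ^ 2 + ε ^ 2)) \
        Metric.ball (p + (δ / dist p x) • (p - x)) (δ + dist p x) := by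
  obtain ⟨hxX, hxp⟩ : x ∈ mSet X p := hx ▸ rfl
  have hr : 0 < dist p x := dist_pos.2 fun h => hpX (h ▸ hxX)
  rintro z ⟨hzX, hqz⟩
  refine ⟨?_, fun hz => ?_⟩
  · have hqx : dist q x ^ 2 = dist p x ^ 2 + ε ^ 2 := by
      rw [dist_eq_norm, dist_eq_norm, ← hε, dist_eq_norm,
        show q - x = (p - x) - (p - q) by abel, norm_sub_sq_real, real_inner_comm, horth]
      ring
    rw [mem_closedBall, dist_comm, hqz, ← hqx, Real.sqrt_sq dist_nonneg]
    exact infDist_le_dist_of_mem hxX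
  · rw [mem_ball, dist_comm] at hz
    linarith [add_le_infDist_ray hX hxX hxp hr hδ hball,
      infDist_le_dist_of_mem (x := p + (δ / dist p x) • (p - x)) hzX]

theorem stmt_19 {n : ℕ} (X : Set (E n)) (hX : IsClosed X) (hne : X.Nonempty)
    (p q : E n) (hpX : p ∉ X) (hpM : p ∉ medialAxis X)
    (x : E n) (hx : mSet X p = {x})
    (δ ε : ℝ) (hδ : 0 < δ) (hball : Metric.ball p δ ∩ medialAxis X = ∅)
    (hε : dist p q = ε) (hεδ : ε < δ)
    (horth : (inner ℝ (p - q) (p - x) : ℝ) = 0) :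
    mSet X q ⊆
      Metric.closedBall q (Real.sqrt (dist p x ^ 2 + ε ^ 2)) \
        Metric.ball (p + (δ / dist p x) • (p - x)) (δ + dist p x) :=
  stmt_19_general X hX p q hpX x hx δ ε hδ hball hε horth
end
end
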